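/- arXiv:2506.14971 — 4 statements merged into one kernel-verified Lean document; each statement's English description precedes it below -/
import Mathlib

section
/- Let f : [0,1] → [0,1] be a transitive piecewise C¹ uniformly expanding Markov map, and suppose there exist δ > 0 and α > 1 such that f(x) = x^{1/α} for all x ∈ [0, δ], and that f has no other singularities (i.e. |f'| is bounded on (δ', 1) minus the partition points for every δ' > 0). Let μ be an f-invariant Borel probability measure satisfying Gibbs bounds with parameter h > 0 (in particular, the unique measure of maximal entropy satisfies this with h = h_top(f)). Then ∫_{(0,1]} |log x| dμ(x) < ∞ if and only if h > log α. -/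
open Set Filter MeasureTheory Topology
open scoped ENNReal

/-- A piecewise `C¹` uniformly expanding Markov map of `[0,1]`:
partition points `pt 0 = 0 < pt 1 < … < pt m = 1`, the map `f` is `C¹` with
`|f'| ≥ lam > 1` on the interior of each partition interval, each branch extends to a
continuous strictly monotone map `br i` of the closed interval, `f` agrees with a one-sided
limit at partition points, and each branch image is a union of partition intervals. -/
structure PCMarkovMap where
  m : ℕ
  hm : 1 ≤ m
  pt : ℕ → ℝ
  pt0 : pt 0 = 0
  ptm : pt m = 1
  pt_lt : ∀ i, i < m → pt i < pt (i + 1)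
  f : ℝ → ℝ
  f_maps : ∀ y ∈ Icc (0:ℝ) 1, f y ∈ Icc (0:ℝ) 1
  lam : ℝ
  lam_gt : 1 < lam
  f_c1 : ∀ i, i < m → ContDiffOn ℝ 1 f (Ioo (pt i) (pt (i + 1)))
  f_exp : ∀ i, i < m → ∀ y ∈ Ioo (pt i) (pt (i + 1)), lam ≤ |deriv f y|
  br : ℕ → ℝ → ℝ
  br_cont : ∀ i, i < m → ContinuousOn (br i) (Icc (pt i) (pt (i + 1)))
  br_mono : ∀ i, i < m →
    StrictMonoOn (br i) (Icc (pt i) (pt (i + 1))) ∨ StrictAntiOn (br i) (Icc (pt i) (pt (i + 1)))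
  br_eq_f : ∀ i, i < m → ∀ y ∈ Ioo (pt i) (pt (i + 1)), br i y = f y
  f_endpoint : ∀ i, i ≤ m →
    (i < m ∧ f (pt i) = br i (pt i)) ∨ (1 ≤ i ∧ f (pt i) = br (i - 1) (pt i))
  markov : ∀ i, i < m → ∃ S : Finset ℕ, (∀ j ∈ S, j < m) ∧
    br i '' Icc (pt i) (pt (i + 1)) = ⋃ j ∈ S, Icc (pt j) (pt (j + 1))

namespace PCMarkovMap
variable (T : PCMarkovMap)

/-- The set of partition points. -/
def ptSet : Set ℝ := {y | ∃ i ≤ T.m, y = T.pt i}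

/-- Transitivity: every interior partition interval eventually visits every other. -/
def Transitive : Prop :=
  ∀ i j, i < T.m → j < T.m →
    ∃ n : ℕ, ((T.f^[n]) ⁻¹' Ioo (T.pt j) (T.pt (j + 1)) ∩ Ioo (T.pt i) (T.pt (i + 1))).Nonempty

/-- The dynamical `n`-cylinder of a word `w`. -/
def cyl (n : ℕ) (w : ℕ → ℕ) : Set ℝ :=
  ⋂ k ∈ Finset.range n, (T.f^[k]) ⁻¹' Ioo (T.pt (w k)) (T.pt (w k + 1))

/-- `μ` satisfies Gibbs bounds with parameter `h`:
`c₁ e^{-nh} ≤ μ(C_w) ≤ c₂ e^{-nh}` for every nonempty dynamical `n`-cylinder. -/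
def Gibbs (μ : Measure ℝ) (h : ℝ) : Prop :=
  ∃ c₁ c₂ : ℝ, 0 < c₁ ∧ 0 < c₂ ∧ ∀ n : ℕ, 1 ≤ n → ∀ w : ℕ → ℕ,
    (∀ k, k < n → w k < T.m) → (T.cyl n w).Nonempty →
      ENNReal.ofReal (c₁ * Real.exp (-(n : ℝ) * h)) ≤ μ (T.cyl n w) ∧
      μ (T.cyl n w) ≤ ENNReal.ofReal (c₂ * Real.exp (-(n : ℝ) * h))

/-- `f`-invariance of a measure. -/
def Invariant (μ : Measure ℝ) : Prop :=
  ∀ s : Set ℝ, MeasurableSet s → μ (T.f ⁻¹' s) = μ s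

/-- No singularities away from `p⁺`: for every `δ' > 0`, `|f'|` is bounded on
`[0,1] \ (p, p+δ')` minus the partition points. -/
def NoSingularitiesOff (p : ℝ) : Prop :=
  ∀ δ' : ℝ, 0 < δ' → ∃ M : ℝ, ∀ y ∈ (Icc (0:ℝ) 1 \ Ioo p (p + δ')) \ T.ptSet, |deriv T.f y| ≤ M

/-- A singularity at `p⁺`: `limsup_{y → p⁺} |f'(y)| = ∞`. -/
def SingularAt (p : ℝ) : Prop :=
  ∀ M : ℝ, ∃ᶠ y in 𝓝[>] p, M ≤ |deriv T.f y|

end PCMarkovMap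

/-- `f^n` is increasing on a right neighborhood of `p` and `f^n(x) → p` as `x → p⁺`. -/
def PerSingAux (f : ℝ → ℝ) (p : ℝ) (n : ℕ) : Prop :=
  ∃ δ : ℝ, 0 < δ ∧ StrictMonoOn (f^[n]) (Ioo p (p + δ)) ∧
    Tendsto (f^[n]) (𝓝[>] p) (𝓝 p)

namespace MMEAux

open Set Filter MeasureTheory Topology
open scoped ENNReal

variable {T : PCMarkovMap}

/-- The all-zeros word. -/
def w0 : ℕ → ℕ := fun _ => 0

lemma mem_cyl_iff {n : ℕ} {x : ℝ} :
    x ∈ T.cyl n w0 ↔ ∀ k < n, T.f^[k] x ∈ Ioo (T.pt 0) (T.pt 1) := by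
  simp [PCMarkovMap.cyl, w0]

lemma cyl_antitone {n n' : ℕ} (hnn : n ≤ n') : T.cyl n' w0 ⊆ T.cyl n w0 := by
  intro x hx
  rw [mem_cyl_iff] at hx ⊢
  exact fun k hk => hx k (lt_of_lt_of_le hk hnn)

lemma mem_cyl_succ {n : ℕ} {x : ℝ} :
    x ∈ T.cyl (n + 1) w0 ↔ x ∈ Ioo (T.pt 0) (T.pt 1) ∧ T.f x ∈ T.cyl n w0 := by
  rw [mem_cyl_iff]
  constructor
  · intro H
    refine ⟨by simpa using H 0 (Nat.succ_pos n), mem_cyl_iff.2 fun k hk => ?_⟩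
    have := H (k + 1) (by omega)
    rwa [Function.iterate_succ_apply] at this
  · rintro ⟨h0, h1⟩ k hk
    cases k with
    | zero => simpa using h0
    | succ k =>
      rw [Function.iterate_succ_apply]
      exact mem_cyl_iff.1 h1 k (by omega)

lemma pos_of_mem_cyl {n : ℕ} {x : ℝ} (hx : x ∈ T.cyl (n + 1) w0) : 0 < x := by
  have := mem_cyl_iff.1 hx 0 (by omega)
  rw [Function.iterate_zero_apply, T.pt0] at this
  exact this.1

lemma pt1_pos : 0 < T.pt 1 := by
  have := T.pt_lt 0 T.hm
  rwa [T.pt0] at this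

lemma pt1_le_one : T.pt 1 ≤ 1 := by
  have key : ∀ k, 1 + k ≤ T.m → T.pt 1 ≤ T.pt (1 + k) := by
    intro k
    induction k with
    | zero => intro _; exact le_refl _
    | succ k ih =>
      intro hk
      have h1 := ih (by omega)
      have h2 : T.pt (1 + k) < T.pt (1 + k + 1) := T.pt_lt (1 + k) (by omega)
      have h3 : (1 + (k + 1)) = (1 + k) + 1 := by omega
      rw [h3]
      linarith
  have := key (T.m - 1) (by have := T.hm; omega)
  rwa [show 1 + (T.m - 1) = T.m from by have := T.hm; omega, T.ptm] at this

end MMEAux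
namespace MMEAux

open Set Filter MeasureTheory Topology
open scoped ENNReal

variable {T : PCMarkovMap} {δ α ε : ℝ}

lemma small_in_cyl (hα : 1 < α) (hpow : ∀ y ∈ Icc (0:ℝ) δ, T.f y = y ^ (1 / α))
    (hε0 : 0 < ε) (hεδ : ε ≤ δ) (hεp : ε < T.pt 1) (hε1 : ε < 1)
    (n : ℕ) {x : ℝ} (hx0 : 0 < x) (hxs : x ≤ Real.exp (-(α ^ n * (-Real.log ε)))) :
    x ∈ T.cyl (n + 1) w0 := by
  set K := -Real.log ε with hK
  have hKpos : 0 < K := by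
    have := Real.log_neg hε0 hε1; rw [hK]; linarith
  have hα0 : (0:ℝ) < α := lt_trans one_pos hα
  have hlogx : Real.log x ≤ -(α ^ n * K) := (Real.log_le_iff_le_exp hx0).2 hxs
  have hbound : ∀ k, k ≤ n → x ^ ((α⁻¹ : ℝ) ^ k) ≤ ε := by
    intro k hk
    have hEpos : (0:ℝ) < α⁻¹ ^ k := pow_pos (inv_pos.2 hα0) k
    rw [Real.rpow_def_of_pos hx0]
    have h1 : Real.log x * α⁻¹ ^ k ≤ (-(α ^ n * K)) * α⁻¹ ^ k :=
      mul_le_mul_of_nonneg_right hlogx hEpos.le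
    have h2 : α ^ k * α⁻¹ ^ k = 1 := by
      rw [← mul_pow, mul_inv_cancel₀ (ne_of_gt hα0), one_pow]
    have h3 : α ^ k ≤ α ^ n := pow_le_pow_right₀ hα.le hk
    have h4 : (-(α ^ n * K)) * α⁻¹ ^ k ≤ -K := by nlinarith [mul_le_mul_of_nonneg_right h3 hEpos.le, hKpos, h2]
    calc Real.exp (Real.log x * α⁻¹ ^ k) ≤ Real.exp (-K) := Real.exp_le_exp.2 (le_trans h1 h4)
    _ = ε := by rw [hK, neg_neg, Real.exp_log hε0]
  have key : ∀ k, k ≤ n → T.f^[k] x = x ^ ((α⁻¹ : ℝ) ^ k) ∧ T.f^[k] x ≤ ε := by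
    intro k
    induction k with
    | zero =>
      intro _
      constructor
      · rw [Function.iterate_zero_apply, pow_zero, Real.rpow_one]
      · rw [Function.iterate_zero_apply]
        have := hbound 0 (Nat.zero_le n)
        rwa [pow_zero, Real.rpow_one] at this
    | succ k ih =>
      intro hk
      obtain ⟨hek, hbk⟩ := ih (by omega)
      have hzpos : 0 < T.f^[k] x := hek ▸ Real.rpow_pos_of_pos hx0 _
      have hmem : T.f^[k] x ∈ Icc (0:ℝ) δ := ⟨hzpos.le, le_trans hbk hεδ⟩
      have hstep : T.f^[k + 1] x = x ^ ((α⁻¹ : ℝ) ^ (k + 1)) := by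
        rw [Function.iterate_succ_apply', hpow _ hmem, hek, ← Real.rpow_natCast]
        rw [← Real.rpow_mul hx0.le]
        · congr 1
          rw [Real.rpow_natCast, pow_succ, one_div]
      exact ⟨hstep, by rw [hstep]; exact hbound (k + 1) hk⟩
  rw [mem_cyl_iff]
  intro k hk
  obtain ⟨he, hb⟩ := key k (by omega)
  rw [T.pt0]
  exact ⟨he ▸ Real.rpow_pos_of_pos hx0 _, lt_of_le_of_lt hb hεp⟩

lemma cyl_ordConnected (T : PCMarkovMap) : ∀ n : ℕ, OrdConnected (T.cyl n w0) := by
  have hm' : 0 < T.m := T.hm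
  have hfm : StrictMonoOn T.f (Ioo (T.pt 0) (T.pt 1)) ∨
      StrictAntiOn T.f (Ioo (T.pt 0) (T.pt 1)) := by
    rcases T.br_mono 0 hm' with hb | hb
    · left; intro x hx y hy hxy
      rw [← T.br_eq_f 0 hm' x hx, ← T.br_eq_f 0 hm' y hy]
      exact hb (Ioo_subset_Icc_self hx) (Ioo_subset_Icc_self hy) hxy
    · right; intro x hx y hy hxy
      rw [← T.br_eq_f 0 hm' x hx, ← T.br_eq_f 0 hm' y hy]
      exact hb (Ioo_subset_Icc_self hx) (Ioo_subset_Icc_self hy) hxy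
  intro n
  induction n with
  | zero =>
    have : T.cyl 0 w0 = univ := by simp [PCMarkovMap.cyl]
    rw [this]; exact ordConnected_univ
  | succ n ih =>
    refine ⟨fun x hx y hy => fun z hz => ?_⟩
    rw [mem_cyl_succ] at hx hy ⊢
    have hzI : z ∈ Ioo (T.pt 0) (T.pt 1) :=
      ⟨lt_of_lt_of_le hx.1.1 hz.1, lt_of_le_of_lt hz.2 hy.1.2⟩
    refine ⟨hzI, ?_⟩
    rcases hfm with hmono | hanti
    · exact ih.out hx.2 hy.2
        ⟨hmono.monotoneOn hx.1 hzI hz.1, hmono.monotoneOn hzI hy.1 hz.2⟩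
    · exact ih.out hy.2 hx.2
        ⟨hanti.antitoneOn hzI hy.1 hz.2, hanti.antitoneOn hx.1 hzI hz.1⟩

lemma cyl_expansion
    (hne : ∀ n : ℕ, ∀ y : ℝ, 0 < y → ∃ z, 0 < z ∧ z ≤ y ∧ z ∈ T.cyl (n + 1) w0)
    (n : ℕ) {x : ℝ} (hx : x ∈ T.cyl (n + 1) w0) : x * T.lam ^ n ≤ 4 := by
  have hm' : 0 < T.m := T.hm
  have hp1 : T.pt 1 ≤ 1 := pt1_le_one
  have hx0 : 0 < x := pos_of_mem_cyl hx
  have hsub : Ioo 0 x ⊆ T.cyl (n + 1) w0 := by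
    intro y hy
    obtain ⟨z, hz0, hzy, hzC⟩ := hne n y hy.1
    exact (cyl_ordConnected T (n + 1)).out hzC hx ⟨hzy, hy.2.le⟩
  have hlam0 : (0:ℝ) < T.lam := lt_trans one_pos T.lam_gt
  have hdiff : ∀ k, ∀ y : ℝ, y ∈ T.cyl (n + 1) w0 → k ≤ n →
      ∃ d, HasDerivAt (T.f^[k]) d y ∧ T.lam ^ k ≤ |d| := by
    intro k
    induction k with
    | zero =>
      intro y _ _
      refine ⟨1, ?_, by simp⟩
      rw [Function.iterate_zero]
      exact hasDerivAt_id y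
    | succ k ih =>
      intro y hy hk
      obtain ⟨d, hd, hdl⟩ := ih y hy (by omega)
      have hz : T.f^[k] y ∈ Ioo (T.pt 0) (T.pt 1) := mem_cyl_iff.1 hy k (by omega)
      have hfd : DifferentiableAt ℝ T.f (T.f^[k] y) :=
        ((T.f_c1 0 hm').differentiableOn one_ne_zero).differentiableAt (isOpen_Ioo.mem_nhds hz)
      refine ⟨deriv T.f (T.f^[k] y) * d, ?_, ?_⟩
      · rw [Function.iterate_succ']
        exact hfd.hasDerivAt.comp y hd
      · rw [abs_mul, pow_succ, mul_comm (T.lam ^ k)]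
        exact mul_le_mul (T.f_exp 0 hm' _ hz) hdl (pow_nonneg hlam0.le k) (abs_nonneg _)
  have hg : ∀ y ∈ Ioo (0:ℝ) x,
      HasDerivAt (T.f^[n]) (deriv (T.f^[n]) y) y ∧ T.lam ^ n ≤ |deriv (T.f^[n]) y| := by
    intro y hy
    obtain ⟨d, hd, hdl⟩ := hdiff n y (hsub hy) le_rfl
    have hdd : deriv (T.f^[n]) y = d := hd.deriv
    rw [hdd]; exact ⟨hd, hdl⟩
  have hab : x / 4 < x / 2 := by linarith
  have hsubI : Icc (x / 4) (x / 2) ⊆ Ioo (0:ℝ) x := by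
    intro y hy
    exact ⟨by linarith [hy.1], by linarith [hy.2]⟩
  have hsubI' : Ioo (x / 4) (x / 2) ⊆ Ioo (0:ℝ) x := fun y hy => hsubI ⟨hy.1.le, hy.2.le⟩
  have hcont : ContinuousOn (T.f^[n]) (Icc (x / 4) (x / 2)) :=
    fun y hy => ((hg y (hsubI hy)).1.continuousAt).continuousWithinAt
  obtain ⟨c, hc, hslope⟩ := exists_hasDerivAt_eq_slope (T.f^[n]) (deriv (T.f^[n])) hab hcont
    (fun y hy => (hg y (hsubI' hy)).1)
  have h1 : T.lam ^ n ≤ |deriv (T.f^[n]) c| := (hg c (hsubI' hc)).2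
  rw [hslope] at h1
  have hb1 : T.f^[n] (x / 2) ∈ Ioo (T.pt 0) (T.pt 1) :=
    mem_cyl_iff.1 (hsub ⟨by linarith, by linarith⟩) n (by omega)
  have hb2 : T.f^[n] (x / 4) ∈ Ioo (T.pt 0) (T.pt 1) :=
    mem_cyl_iff.1 (hsub ⟨by linarith, by linarith⟩) n (by omega)
  rw [T.pt0] at hb1 hb2
  have hnum : |T.f^[n] (x / 2) - T.f^[n] (x / 4)| ≤ 1 := by
    rw [abs_le]
    constructor
    · nlinarith [hb1.1, hb1.2, hb2.1, hb2.2]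
    · nlinarith [hb1.1, hb1.2, hb2.1, hb2.2]
  have hden : x / 2 - x / 4 = x / 4 := by ring
  rw [abs_div, hden, abs_of_pos (by linarith : (0:ℝ) < x / 4)] at h1
  have hx4 : (0:ℝ) < x / 4 := by linarith
  have h2 : T.lam ^ n * (x / 4) ≤ |T.f^[n] (x / 2) - T.f^[n] (x / 4)| := (le_div_iff₀ hx4).1 h1
  nlinarith [h2, hnum]

end MMEAux
namespace MMEAux

open Set Filter MeasureTheory Topology
open scoped ENNReal

variable {T : PCMarkovMap} {δ α ε : ℝ}

lemma cyl_log_lower (hα : 1 < α) (hpow : ∀ y ∈ Icc (0:ℝ) δ, T.f y = y ^ (1 / α))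
    (hε0 : 0 < ε) (hεδ : ε ≤ δ) (hε1 : ε < 1) (N : ℕ)
    (hN : ∀ x ∈ T.cyl (N + 1) w0, x < ε) :
    ∀ j : ℕ, ∀ x ∈ T.cyl (N + 1 + j) w0, α ^ j * (-Real.log ε) ≤ -Real.log x := by
  intro j
  induction j with
  | zero =>
    intro x hx
    have hx0 : 0 < x := pos_of_mem_cyl hx
    have := Real.log_lt_log hx0 (hN x hx)
    simp only [pow_zero, one_mul]
    linarith
  | succ j ih =>
    intro x hx
    have hx' : x ∈ T.cyl (N + 1) w0 := cyl_antitone (by omega) hx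
    have hx0 : 0 < x := pos_of_mem_cyl hx'
    have hxε : x < ε := hN x hx'
    have hfx : T.f x ∈ T.cyl (N + 1 + j) w0 := (mem_cyl_succ.1 hx).2
    have hIH := ih (T.f x) hfx
    have hfeq : T.f x = x ^ (1 / α : ℝ) := hpow x ⟨hx0.le, le_trans hxε.le hεδ⟩
    rw [hfeq, Real.log_rpow hx0] at hIH
    have hα0 : (0:ℝ) < α := by linarith
    have h2 : α * (α ^ j * (-Real.log ε)) ≤ α * -(1 / α * Real.log x) :=
      mul_le_mul_of_nonneg_left hIH hα0.le
    have h3 : α * -(1 / α * Real.log x) = -Real.log x := by field_simp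
    calc α ^ (j + 1) * (-Real.log ε) = α * (α ^ j * (-Real.log ε)) := by ring
    _ ≤ α * -(1 / α * Real.log x) := h2
    _ = -Real.log x := h3

end MMEAux
set_option maxHeartbeats 2000000 in
/-- For a transitive piecewise `C¹` uniformly expanding Markov map `f` of
`[0,1]` with `f(x) = x^{1/α}` on `[0,δ]` and no other singularities, an `f`-invariant Borel
probability measure `μ` satisfying Gibbs bounds with parameter `h > 0` (e.g. the MME with
`h = h_top(f)`) satisfies `∫_{(0,1]} |log x| dμ < ∞` if and only if `h > log α`. -/
theorem mme_adapted_iff_entropy_gt_log_alpha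
    (T : PCMarkovMap) (htrans : T.Transitive)
    (δ α : ℝ) (hδ : 0 < δ) (hα : 1 < α)
    (hpow : ∀ y ∈ Icc (0:ℝ) δ, T.f y = y ^ (1 / α))
    (hnosing : T.NoSingularitiesOff 0)
    (μ : Measure ℝ) [IsProbabilityMeasure μ] (hinv : T.Invariant μ)
    (h : ℝ) (hh : 0 < h) (hGibbs : T.Gibbs μ h) :
    (∫⁻ y in Ioc (0:ℝ) 1, ENNReal.ofReal |Real.log y| ∂μ) < ⊤ ↔ Real.log α < h := by
  classical
  obtain ⟨c₁, c₂, hc₁, hc₂, hG⟩ := hGibbs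
  have hm' : 0 < T.m := T.hm
  have hp1pos : 0 < T.pt 1 := MMEAux.pt1_pos (T := T)
  have hp1le : T.pt 1 ≤ 1 := MMEAux.pt1_le_one (T := T)
  have hα0 : (0:ℝ) < α := by linarith
  set ε := min δ (T.pt 1 / 2) with hεdef
  have hε0 : 0 < ε := lt_min hδ (by linarith)
  have hεδ : ε ≤ δ := min_le_left _ _
  have hεp : ε < T.pt 1 := lt_of_le_of_lt (min_le_right _ _) (by linarith)
  have hε1 : ε < 1 := lt_of_lt_of_le hεp hp1le
  set K := -Real.log ε with hKdef
  have hKpos : 0 < K := by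
    have := Real.log_neg hε0 hε1; rw [hKdef]; linarith
  set s : ℕ → ℝ := fun n => Real.exp (-(α ^ n * K)) with hsdef
  have hspos : ∀ n, 0 < s n := fun n => Real.exp_pos _
  have hlog_s : ∀ m : ℕ, Real.log (s m) = -(α ^ m * K) := fun m => Real.log_exp _
  have hsmall : ∀ n : ℕ, ∀ x : ℝ, 0 < x → x ≤ s n → x ∈ T.cyl (n + 1) MMEAux.w0 :=
    fun n x h1 h2 => MMEAux.small_in_cyl hα hpow hε0 hεδ hεp hε1 n h1 h2
  have hne : ∀ n : ℕ, ∀ y : ℝ, 0 < y → ∃ z, 0 < z ∧ z ≤ y ∧ z ∈ T.cyl (n + 1) MMEAux.w0 := by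
    intro n y hy
    exact ⟨min y (s n), lt_min hy (hspos n), min_le_left _ _,
      hsmall n _ (lt_min hy (hspos n)) (min_le_right _ _)⟩
  have hGb : ∀ n : ℕ,
      ENNReal.ofReal (c₁ * Real.exp (-((n:ℝ) + 1) * h)) ≤ μ (T.cyl (n + 1) MMEAux.w0) ∧
      μ (T.cyl (n + 1) MMEAux.w0) ≤ ENNReal.ofReal (c₂ * Real.exp (-((n:ℝ) + 1) * h)) := by
    intro n
    have := hG (n + 1) (by omega) MMEAux.w0 (fun k _ => hm')
      ⟨s n, hsmall n (s n) (hspos n) le_rfl⟩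
    rwa [Nat.cast_add, Nat.cast_one] at this
  have hmeas : ∀ n, MeasurableSet (T.cyl n MMEAux.w0) :=
    fun n => (MMEAux.cyl_ordConnected T n).measurableSet
  have hsanti : ∀ i j : ℕ, i ≤ j → s j ≤ s i := by
    intro i j hij
    apply Real.exp_le_exp.2
    have : α ^ i ≤ α ^ j := pow_le_pow_right₀ hα.le hij
    nlinarith [hKpos]
  constructor
  · -- finiteness implies log α < h
    intro hfin
    by_contra hcon
    push_neg at hcon
    -- choose N with cyl (N+1) ⊆ (0, ε)
    obtain ⟨N, hNc⟩ := pow_unbounded_of_one_lt (4 / ε) T.lam_gt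
    have hCN : ∀ x ∈ T.cyl (N + 1) MMEAux.w0, x < ε := by
      intro x hx
      have h1 : x * T.lam ^ N ≤ 4 := MMEAux.cyl_expansion hne N hx
      have h4 : 4 < T.lam ^ N * ε := by
        rw [div_lt_iff₀ hε0] at hNc; linarith
      have hlamN : (0:ℝ) < T.lam ^ N := pow_pos (by linarith [T.lam_gt]) N
      nlinarith
    have hlower := MMEAux.cyl_log_lower hα hpow hε0 hεδ hε1 N hCN
    have hαh : ∀ J : ℕ, (1:ℝ) ≤ α ^ J * Real.exp (-((J:ℝ) * h)) := by
      intro J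
      have h1 : Real.exp h ≤ α := by
        have := Real.exp_le_exp.2 hcon
        rwa [Real.exp_log hα0] at this
      have h2 : Real.exp ((J:ℝ) * h) ≤ α ^ J := by
        rw [Real.exp_nat_mul]
        exact pow_le_pow_left₀ (Real.exp_pos h).le h1 J
      have h3 : (1:ℝ) ≤ α ^ J / Real.exp ((J:ℝ) * h) := (one_le_div (Real.exp_pos _)).2 h2
      rwa [div_eq_mul_inv, ← Real.exp_neg] at h3
    set F : ℝ → ℝ≥0∞ := fun x => ENNReal.ofReal |Real.log x| with hFdef
    have hFmeas : Measurable F := Real.measurable_log.abs.ennreal_ofReal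
    set ν : Measure ℝ := (μ.restrict (Ioc 0 1)).withDensity F with hνdef
    have hν_apply : ∀ S : Set ℝ, MeasurableSet S → S ⊆ Ioc (0:ℝ) 1 →
        ν S = ∫⁻ x in S, F x ∂μ := by
      intro S hS hsub
      rw [hνdef, withDensity_apply _ hS, Measure.restrict_restrict hS,
        inter_eq_self_of_subset_left hsub]
    set Z : Set ℝ := ⋂ n, T.cyl n MMEAux.w0 with hZdef
    have hZmeas : MeasurableSet Z := MeasurableSet.iInter fun n => hmeas n
    have hgeo0 : Tendsto (fun n : ℕ => ENNReal.ofReal (c₂ * Real.exp (-((n:ℝ) + 1) * h)))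
        atTop (𝓝 0) := by
      have h1 : Tendsto (fun n : ℕ => (Real.exp (-h)) ^ n) atTop (𝓝 0) :=
        tendsto_pow_atTop_nhds_zero_of_lt_one (Real.exp_pos _).le
          (Real.exp_lt_one_iff.2 (by linarith))
      have h2 : Tendsto (fun n : ℕ => c₂ * (Real.exp (-h)) ^ (n + 1)) atTop (𝓝 0) := by
        have := (h1.comp (tendsto_add_atTop_nat 1)).const_mul c₂
        simpa using this
      have h3 : (fun n : ℕ => ENNReal.ofReal (c₂ * Real.exp (-((n:ℝ) + 1) * h))) =
          fun n : ℕ => ENNReal.ofReal (c₂ * (Real.exp (-h)) ^ (n + 1)) := by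
        funext n
        congr 2
        rw [← Real.exp_nat_mul]
        congr 1
        push_cast
        ring
      rw [h3]
      simpa using ENNReal.tendsto_ofReal h2
    have hZ0 : μ Z = 0 := by
      have hle : ∀ n : ℕ, μ Z ≤ ENNReal.ofReal (c₂ * Real.exp (-((n:ℝ) + 1) * h)) :=
        fun n => le_trans (measure_mono (iInter_subset _ (n + 1))) (hGb n).2
      exact le_antisymm (ge_of_tendsto' hgeo0 hle) zero_le
    set A : ℕ → Set ℝ := fun J => T.cyl (N + 1 + J) MMEAux.w0 \ Z with hAdef
    have hAmeas : ∀ J, MeasurableSet (A J) := fun J => (hmeas _).diff hZmeas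
    have hAanti : Antitone A := fun i j hij =>
      diff_subset_diff_left (MMEAux.cyl_antitone (by omega))
    have hAsub : ∀ J, A J ⊆ Ioc (0:ℝ) 1 := by
      intro J x hx
      have h1 := MMEAux.mem_cyl_iff.1 hx.1 0 (by omega)
      rw [Function.iterate_zero_apply, T.pt0] at h1
      exact ⟨h1.1, le_trans h1.2.le hp1le⟩
    have hAint : ⋂ J, A J = ∅ := by
      ext x
      simp only [mem_iInter, mem_empty_iff_false, iff_false]
      intro hall
      have hxZ : x ∈ Z := by
        rw [hZdef]
        exact mem_iInter.2 fun n =>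
          MMEAux.cyl_antitone (show n ≤ N + 1 + n by omega) (hall n).1
      exact (hall 0).2 hxZ
    have hνfin : ν univ ≠ ⊤ := by
      rw [hνdef, withDensity_apply _ MeasurableSet.univ, Measure.restrict_univ]
      exact hfin.ne
    have htendA : Tendsto (fun J => ν (A J)) atTop (𝓝 (ν (⋂ J, A J))) :=
      tendsto_measure_iInter_atTop (fun J => (hAmeas J).nullMeasurableSet) hAanti
        ⟨0, ne_top_of_le_ne_top hνfin (measure_mono (subset_univ _))⟩
    rw [hAint, measure_empty] at htendA
    have hCb : ∀ J : ℕ, ENNReal.ofReal (K * c₁ * Real.exp (-((N:ℝ) + 1) * h)) ≤ ν (A J) := by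
      intro J
      have hmemF : ∀ x ∈ A J, ENNReal.ofReal (α ^ J * K) ≤ F x := by
        intro x hx
        have hl := hlower J x hx.1
        have h2 : α ^ J * K ≤ |Real.log x| := le_trans hl (neg_le_abs _)
        exact ENNReal.ofReal_le_ofReal h2
      have h1 : ENNReal.ofReal (α ^ J * K) * μ (A J) ≤ ∫⁻ x in A J, F x ∂μ := by
        rw [← setLIntegral_const (A J) (ENNReal.ofReal (α ^ J * K))]
        exact setLIntegral_mono hFmeas hmemF
      have hμA : μ (A J) = μ (T.cyl (N + 1 + J) MMEAux.w0) := measure_diff_null hZ0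
      have h2 : ENNReal.ofReal (c₁ * Real.exp (-((↑(N + J):ℝ) + 1) * h)) ≤ μ (A J) := by
        rw [hμA, show N + 1 + J = N + J + 1 from by omega]
        exact (hGb (N + J)).1
      have hsplit : Real.exp (-((↑(N + J):ℝ) + 1) * h)
          = Real.exp (-((N:ℝ) + 1) * h) * Real.exp (-((J:ℝ) * h)) := by
        rw [← Real.exp_add]
        congr 1
        push_cast
        ring
      calc ENNReal.ofReal (K * c₁ * Real.exp (-((N:ℝ) + 1) * h))
          ≤ ENNReal.ofReal ((α ^ J * K) * (c₁ * Real.exp (-((↑(N + J):ℝ) + 1) * h))) := by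
            apply ENNReal.ofReal_le_ofReal
            rw [hsplit]
            have hpos : (0:ℝ) ≤ K * c₁ * Real.exp (-((N:ℝ) + 1) * h) := by positivity
            nlinarith [mul_le_mul_of_nonneg_right (hαh J) hpos,
              Real.exp_pos (-((N:ℝ) + 1) * h), Real.exp_pos (-((J:ℝ) * h))]
        _ = ENNReal.ofReal (α ^ J * K) *
            ENNReal.ofReal (c₁ * Real.exp (-((↑(N + J):ℝ) + 1) * h)) :=
            ENNReal.ofReal_mul (by positivity)
        _ ≤ ENNReal.ofReal (α ^ J * K) * μ (A J) := mul_le_mul_right h2 _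
        _ ≤ ∫⁻ x in A J, F x ∂μ := h1
        _ = ν (A J) := (hν_apply _ (hAmeas J) (hAsub J)).symm
    have hge := ge_of_tendsto' htendA hCb
    have hposC : (0:ℝ≥0∞) < ENNReal.ofReal (K * c₁ * Real.exp (-((N:ℝ) + 1) * h)) :=
      ENNReal.ofReal_pos.2 (by positivity)
    exact absurd hge (not_le.2 hposC)
  · -- log α < h implies finiteness
    intro hlt
    have hr1 : α * Real.exp (-h) < 1 := by
      have h1 : α < Real.exp h := by
        have := Real.exp_lt_exp.2 hlt
        rwa [Real.exp_log hα0] at this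
      rw [Real.exp_neg, ← div_eq_mul_inv]
      exact (div_lt_one (Real.exp_pos h)).2 h1
    set r : ℝ≥0∞ := ENNReal.ofReal (α * Real.exp (-h)) with hrdef
    have hrlt : r < 1 := ENNReal.ofReal_lt_one.2 hr1
    have hptwise : ∀ x ∈ Ioc (0:ℝ) 1, ENNReal.ofReal |Real.log x| ≤
        ENNReal.ofReal (K * α) +
        ∑' n : ℕ, ENNReal.ofReal (K * (α ^ (n + 1 + 1) - α ^ (n + 1))) *
          (Ioc (0:ℝ) (s n)).indicator 1 x := by
      intro x hx
      have hx0 : 0 < x := hx.1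
      have habs : |Real.log x| = -Real.log x :=
        abs_of_nonpos (Real.log_nonpos hx0.le hx.2)
      by_cases hxs0 : s 0 < x
      · have hlt0 : -Real.log x < α ^ 0 * K := by
          have := Real.log_lt_log (hspos 0) hxs0
          rw [hlog_s 0] at this
          linarith
        refine le_trans (ENNReal.ofReal_le_ofReal ?_) le_self_add
        rw [habs]
        nlinarith [hlt0, hKpos]
      · push_neg at hxs0
        have hexist : ∃ n, s n < x := by
          obtain ⟨n, hn⟩ := pow_unbounded_of_one_lt ((-Real.log x) / K) hα
          have h1 : -Real.log x < α ^ n * K := by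
            rw [div_lt_iff₀ hKpos] at hn; linarith
          refine ⟨n, ?_⟩
          have : Real.log (s n) < Real.log x := by rw [hlog_s n]; linarith
          have h2 := Real.exp_lt_exp.2 this
          rwa [Real.exp_log (hspos n), Real.exp_log hx0] at h2
        have h0 : ¬ s 0 < x := not_lt.2 hxs0
        have hfind := Nat.find_spec hexist
        have hne0 : Nat.find hexist ≠ 0 := fun hh => h0 (hh ▸ hfind)
        obtain ⟨n, hxle, hxgt⟩ : ∃ n, x ≤ s n ∧ s (n + 1) < x := by
          refine ⟨Nat.find hexist - 1, le_of_not_gt (Nat.find_min hexist (by omega)), ?_⟩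
          rw [show Nat.find hexist - 1 + 1 = Nat.find hexist from by omega]
          exact hfind
        have hlogb : -Real.log x < α ^ (n + 1) * K := by
          have := Real.log_lt_log (hspos (n + 1)) hxgt
          rw [hlog_s (n + 1)] at this
          linarith
        have hind : ∀ j, j ≤ n → (Ioc (0:ℝ) (s j)).indicator (1 : ℝ → ℝ≥0∞) x = 1 := by
          intro j hj
          have hxm : x ∈ Ioc (0:ℝ) (s j) := ⟨hx0, le_trans hxle (hsanti j n hj)⟩
          rw [indicator_of_mem hxm]
          rfl
        have hsum_le : ∑ j ∈ Finset.range (n + 1),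
            ENNReal.ofReal (K * (α ^ (j + 1 + 1) - α ^ (j + 1)))
            ≤ ∑' j : ℕ, ENNReal.ofReal (K * (α ^ (j + 1 + 1) - α ^ (j + 1))) *
              (Ioc (0:ℝ) (s j)).indicator 1 x := by
          have heq : ∀ j ∈ Finset.range (n + 1),
              ENNReal.ofReal (K * (α ^ (j + 1 + 1) - α ^ (j + 1)))
              = ENNReal.ofReal (K * (α ^ (j + 1 + 1) - α ^ (j + 1))) *
                (Ioc (0:ℝ) (s j)).indicator 1 x := by
            intro j hj
            rw [hind j (by have := Finset.mem_range.1 hj; omega), mul_one]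
          rw [Finset.sum_congr rfl heq]
          exact ENNReal.sum_le_tsum _
        have htel : (∑ j ∈ Finset.range (n + 1),
            ENNReal.ofReal (K * (α ^ (j + 1 + 1) - α ^ (j + 1))))
            = ENNReal.ofReal (K * (α ^ (n + 1 + 1) - α)) := by
          rw [← ENNReal.ofReal_sum_of_nonneg]
          · congr 1
            rw [← Finset.mul_sum]
            congr 1
            rw [Finset.sum_range_sub (fun j => α ^ (j + 1)) (n + 1)]
            norm_num
          · intro j hj
            have : α ^ (j + 1) ≤ α ^ (j + 1 + 1) := pow_le_pow_right₀ hα.le (by omega)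
            nlinarith [hKpos]
        calc ENNReal.ofReal |Real.log x|
            ≤ ENNReal.ofReal (K * α + K * (α ^ (n + 1 + 1) - α)) := by
              apply ENNReal.ofReal_le_ofReal
              rw [habs]
              have hmono : α ^ (n + 1) ≤ α ^ (n + 1 + 1) := pow_le_pow_right₀ hα.le (by omega)
              nlinarith [hlogb, mul_le_mul_of_nonneg_left hmono hKpos.le, hKpos]
          _ = ENNReal.ofReal (K * α) + ENNReal.ofReal (K * (α ^ (n + 1 + 1) - α)) := by
              have hnn : (0:ℝ) ≤ K * (α ^ (n + 1 + 1) - α) := by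
                have h1 : α ^ 1 ≤ α ^ (n + 1 + 1) := pow_le_pow_right₀ hα.le (by omega)
                rw [pow_one] at h1
                nlinarith [hKpos]
              rw [ENNReal.ofReal_add (by positivity) hnn]
          _ ≤ ENNReal.ofReal (K * α) +
              ∑' j : ℕ, ENNReal.ofReal (K * (α ^ (j + 1 + 1) - α ^ (j + 1))) *
                (Ioc (0:ℝ) (s j)).indicator 1 x := by
              apply add_le_add_right
              rw [← htel]
              exact hsum_le
    have hRHSmeas : ∀ n : ℕ, Measurable fun x : ℝ =>
        ENNReal.ofReal (K * (α ^ (n + 1 + 1) - α ^ (n + 1))) *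
          (Ioc (0:ℝ) (s n)).indicator (1 : ℝ → ℝ≥0∞) x :=
      fun n => (measurable_one.indicator measurableSet_Ioc).const_mul _
    have hint1 : (∫⁻ y in Ioc (0:ℝ) 1, ENNReal.ofReal |Real.log y| ∂μ)
        ≤ ∫⁻ y in Ioc (0:ℝ) 1, (ENNReal.ofReal (K * α) +
          ∑' n : ℕ, ENNReal.ofReal (K * (α ^ (n + 1 + 1) - α ^ (n + 1))) *
            (Ioc (0:ℝ) (s n)).indicator 1 y) ∂μ :=
      setLIntegral_mono (measurable_const.add (Measurable.ennreal_tsum hRHSmeas)) hptwise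
    have hint2 : (∫⁻ y in Ioc (0:ℝ) 1, (ENNReal.ofReal (K * α) +
          ∑' n : ℕ, ENNReal.ofReal (K * (α ^ (n + 1 + 1) - α ^ (n + 1))) *
            (Ioc (0:ℝ) (s n)).indicator 1 y) ∂μ)
        = ENNReal.ofReal (K * α) * μ (Ioc 0 1) +
          ∑' n : ℕ, ENNReal.ofReal (K * (α ^ (n + 1 + 1) - α ^ (n + 1))) *
            μ (Ioc (0:ℝ) (s n) ∩ Ioc (0:ℝ) 1) := by
      rw [lintegral_add_left measurable_const]
      rw [lintegral_const, Measure.restrict_apply_univ]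
      congr 1
      rw [lintegral_tsum (fun n => (hRHSmeas n).aemeasurable)]
      congr 1
      funext n
      rw [lintegral_const_mul _ (measurable_one.indicator measurableSet_Ioc)]
      congr 1
      rw [lintegral_indicator measurableSet_Ioc]
      simp only [Pi.one_apply]
      rw [setLIntegral_one, Measure.restrict_apply measurableSet_Ioc]
    have hterm : ∀ n : ℕ,
        ENNReal.ofReal (K * (α ^ (n + 1 + 1) - α ^ (n + 1))) *
          μ (Ioc (0:ℝ) (s n) ∩ Ioc (0:ℝ) 1)
        ≤ ENNReal.ofReal (K * α * c₂) * r ^ (n + 1) := by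
      intro n
      have hnn1 : (0:ℝ) ≤ K * (α ^ (n + 1 + 1) - α ^ (n + 1)) := by
        have : α ^ (n + 1) ≤ α ^ (n + 1 + 1) := pow_le_pow_right₀ hα.le (by omega)
        nlinarith [hKpos]
      have hsub2 : Ioc (0:ℝ) (s n) ∩ Ioc (0:ℝ) 1 ⊆ T.cyl (n + 1) MMEAux.w0 :=
        fun x hx => hsmall n x hx.1.1 hx.1.2
      have hμn : μ (Ioc (0:ℝ) (s n) ∩ Ioc (0:ℝ) 1)
          ≤ ENNReal.ofReal (c₂ * Real.exp (-((n:ℝ) + 1) * h)) :=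
        le_trans (measure_mono hsub2) (hGb n).2
      have hE : Real.exp (-((n:ℝ) + 1) * h) = (Real.exp (-h)) ^ (n + 1) := by
        rw [← Real.exp_nat_mul]
        congr 1
        push_cast
        ring
      calc ENNReal.ofReal (K * (α ^ (n + 1 + 1) - α ^ (n + 1))) *
            μ (Ioc (0:ℝ) (s n) ∩ Ioc (0:ℝ) 1)
          ≤ ENNReal.ofReal (K * (α ^ (n + 1 + 1) - α ^ (n + 1))) *
            ENNReal.ofReal (c₂ * Real.exp (-((n:ℝ) + 1) * h)) := mul_le_mul_right hμn _
        _ = ENNReal.ofReal ((K * (α ^ (n + 1 + 1) - α ^ (n + 1))) *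
            (c₂ * Real.exp (-((n:ℝ) + 1) * h))) := (ENNReal.ofReal_mul hnn1).symm
        _ ≤ ENNReal.ofReal ((K * α * c₂) * (α * Real.exp (-h)) ^ (n + 1)) := by
            apply ENNReal.ofReal_le_ofReal
            rw [hE, mul_pow]
            have hid : K * α * c₂ * (α ^ (n + 1) * Real.exp (-h) ^ (n + 1))
                - K * (α ^ (n + 1 + 1) - α ^ (n + 1)) * (c₂ * Real.exp (-h) ^ (n + 1))
                = K * c₂ * Real.exp (-h) ^ (n + 1) * α ^ (n + 1) := by ring
            have hnn2 : (0:ℝ) ≤ K * c₂ * Real.exp (-h) ^ (n + 1) * α ^ (n + 1) := by positivity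
            linarith
        _ = ENNReal.ofReal (K * α * c₂) * r ^ (n + 1) := by
            rw [ENNReal.ofReal_mul (by positivity), ENNReal.ofReal_pow (by positivity)]
    have hsumle : (∑' n : ℕ, ENNReal.ofReal (K * (α ^ (n + 1 + 1) - α ^ (n + 1))) *
          μ (Ioc (0:ℝ) (s n) ∩ Ioc (0:ℝ) 1))
        ≤ ENNReal.ofReal (K * α * c₂) * ∑' n : ℕ, r ^ (n + 1) := by
      rw [← ENNReal.tsum_mul_left]
      exact ENNReal.tsum_le_tsum hterm
    have hgeofin : (∑' n : ℕ, r ^ (n + 1)) < ⊤ := by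
      rw [ENNReal.tsum_geometric_add_one]
      exact ENNReal.mul_lt_top ENNReal.ofReal_lt_top
        (ENNReal.inv_lt_top.2 (tsub_pos_iff_lt.2 hrlt))
    calc (∫⁻ y in Ioc (0:ℝ) 1, ENNReal.ofReal |Real.log y| ∂μ)
        ≤ ENNReal.ofReal (K * α) * μ (Ioc 0 1) +
          ∑' n : ℕ, ENNReal.ofReal (K * (α ^ (n + 1 + 1) - α ^ (n + 1))) *
            μ (Ioc (0:ℝ) (s n) ∩ Ioc (0:ℝ) 1) := le_trans hint1 (le_of_eq hint2)
      _ ≤ ENNReal.ofReal (K * α) * μ (Ioc 0 1) +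
          ENNReal.ofReal (K * α * c₂) * ∑' n : ℕ, r ^ (n + 1) := add_le_add_right hsumle _
      _ < ⊤ := by
        apply ENNReal.add_lt_top.2
        constructor
        · exact ENNReal.mul_lt_top ENNReal.ofReal_lt_top (measure_lt_top μ _)
        · exact ENNReal.mul_lt_top ENNReal.ofReal_lt_top hgeofin
end

section
/- Let f : [0,1] → [0,1] be a transitive piecewise C¹ uniformly expanding Markov map, and suppose there exist δ > 0 and α > 1 such that f(x) = x^{1/α} for all x ∈ [0, δ], and that f has no other singularities (i.e. |f'| is bounded on (δ', 1) minus the partition points for every δ' > 0). Let μ be an f-invariant Borel probability measure satisfying Gibbs bounds with parameter h > 0. If h = log α, then ∫_{(0,1]} |log x| dμ(x) = ∞ (μ is nonadapted with respect to 0). -/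
open Set Filter MeasureTheory Topology
open scoped ENNReal

/-- For a transitive piecewise `C¹` uniformly expanding Markov map `f` of
`[0,1]` with `f(x) = x^{1/α}` on `[0,δ]` and no other singularities, if an `f`-invariant Borel
probability measure `μ` satisfies Gibbs bounds with parameter `h = log α`, then
`∫_{(0,1]} |log x| dμ = ∞`, i.e. `μ` is nonadapted with respect to `0`. -/
theorem mme_nonadapted_of_entropy_eq_log_alpha
    (T : PCMarkovMap) (htrans : T.Transitive)
    (δ α : ℝ) (hδ : 0 < δ) (hα : 1 < α)
    (hpow : ∀ y ∈ Icc (0:ℝ) δ, T.f y = y ^ (1 / α))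
    (hnosing : T.NoSingularitiesOff 0)
    (μ : Measure ℝ) [IsProbabilityMeasure μ] (hinv : T.Invariant μ)
    (h : ℝ) (hh : 0 < h) (hGibbs : T.Gibbs μ h)
    (heq : h = Real.log α) :
    (∫⁻ y in Ioc (0:ℝ) 1, ENNReal.ofReal |Real.log y| ∂μ) = ⊤ := by
    classical
  obtain ⟨c₁, c₂, hc₁, hc₂, hG⟩ := hGibbs
  have hα0 : (0:ℝ) < α := lt_trans one_pos hα
  have hm0 : 0 < T.m := T.hm
  have hp1 : 0 < T.pt 1 := by
    have := T.pt_lt 0 hm0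
    rwa [T.pt0] at this
  -- monotonicity of partition points
  have hmono : ∀ d j, j + d ≤ T.m → T.pt j ≤ T.pt (j + d) := by
    intro d
    induction d with
    | zero => intro j _; simp
    | succ d ih =>
      intro j hj
      have h1 : T.pt j ≤ T.pt (j + d) := ih j (by omega)
      have h2 : T.pt (j + d) < T.pt (j + d + 1) := T.pt_lt _ (by omega)
      have : j + (d + 1) = j + d + 1 := by omega
      rw [this]
      linarith
  have hp1le : T.pt 1 ≤ 1 := by
    have := hmono (T.m - 1) 1 (by omega)
    rw [show 1 + (T.m - 1) = T.m by omega, T.ptm] at this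
    exact this
  set p1 := T.pt 1 with hp1def
  -- the modified δ
  set δ₀ := min δ (min p1 1) / 2 with hδ₀def
  have hδ₀pos : 0 < δ₀ := by
    have : 0 < min δ (min p1 1) := lt_min hδ (lt_min hp1 one_pos)
    positivity
  have hδ₀δ : δ₀ ≤ δ := by
    have : min δ (min p1 1) ≤ δ := min_le_left _ _
    rw [hδ₀def]; linarith
  have hδ₀p1 : δ₀ < p1 := by
    have h1 : min δ (min p1 1) ≤ p1 := le_trans (min_le_right _ _) (min_le_left _ _)
    rw [hδ₀def]; linarith
  have hδ₀1 : δ₀ < 1 := by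
    have h1 : min δ (min p1 1) ≤ 1 := le_trans (min_le_right _ _) (min_le_right _ _)
    rw [hδ₀def]; linarith
  -- t k = δ₀ ^ (α ^ k)
  set t : ℕ → ℝ := fun k => δ₀ ^ ((α : ℝ) ^ k) with htdef
  have ht_pos : ∀ k, 0 < t k := fun k => Real.rpow_pos_of_pos hδ₀pos _
  have hαk1 : ∀ k : ℕ, (1:ℝ) ≤ α ^ k := fun k => one_le_pow₀ hα.le
  have ht_le : ∀ k, t k ≤ δ₀ := by
    intro k
    have := Real.rpow_le_rpow_of_exponent_ge hδ₀pos hδ₀1.le (hαk1 k)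
    rwa [Real.rpow_one] at this
  have ht_anti : ∀ j k : ℕ, j ≤ k → t k ≤ t j := by
    intro j k hjk
    exact Real.rpow_le_rpow_of_exponent_ge hδ₀pos hδ₀1.le
      (pow_le_pow_right₀ hα.le hjk)
  have hf_eq : ∀ y : ℝ, 0 < y → y ≤ δ₀ → T.f y = y ^ (1/α) :=
    fun y h1 h2 => hpow y ⟨le_of_lt h1, le_trans h2 hδ₀δ⟩
  -- stepping down along t
  have hstep : ∀ k, T.f (t (k+1)) = t k := by
    intro k
    rw [hf_eq (t (k+1)) (ht_pos _) (ht_le _)]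
    show (δ₀ ^ ((α:ℝ) ^ (k+1))) ^ (1/α) = δ₀ ^ ((α:ℝ) ^ k)
    rw [← Real.rpow_mul hδ₀pos.le]
    congr 1
    field_simp [pow_succ]
    ring
  have hiter : ∀ j k, T.f^[j] (t (j + k)) = t k := by
    intro j
    induction j with
    | zero => intro k; simp
    | succ j ih =>
      intro k
      rw [Function.iterate_succ_apply, show j + 1 + k = (j + k) + 1 by omega,
        hstep (j + k), ih k]
  -- the all-zeros cylinder is nonempty
  have hcylmem : ∀ n : ℕ, 1 ≤ n → t n ∈ T.cyl n (fun _ => 0) := by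
    intro n hn
    simp only [PCMarkovMap.cyl, Set.mem_iInter, Set.mem_preimage, Finset.mem_range]
    intro j hj
    have hj' : T.f^[j] (t n) = t (n - j) := by
      have := hiter j (n - j)
      rwa [show j + (n - j) = n by omega] at this
    rw [hj', T.pt0]
    exact ⟨ht_pos _, lt_of_le_of_lt (ht_le _) hδ₀p1⟩
  -- derivative facts
  have hc1f : ContDiffOn ℝ 1 T.f (Ioo 0 p1) := by
    have := T.f_c1 0 hm0
    rwa [T.pt0] at this
  have hIooSub : Ioo (0:ℝ) δ₀ ⊆ Ioo 0 p1 := Ioo_subset_Ioo le_rfl hδ₀p1.le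
  have hdiffAt : ∀ y ∈ Ioo (0:ℝ) p1, DifferentiableAt ℝ T.f y := by
    intro y hy
    exact (hc1f.differentiableOn one_ne_zero).differentiableAt (isOpen_Ioo.mem_nhds hy)
  have habs : ∀ y ∈ Ioo (0:ℝ) p1, T.lam ≤ |deriv T.f y| := by
    intro y hy
    have := T.f_exp 0 hm0 y (by rwa [T.pt0])
    exact this
  have hderiv_pow : ∀ y ∈ Ioo (0:ℝ) δ₀, deriv T.f y = (1/α) * y ^ (1/α - 1) := by
    intro y hy
    have hev : T.f =ᶠ[nhds y] fun z => z ^ (1/α) := by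
      filter_upwards [isOpen_Ioo.mem_nhds hy] with z hz
      exact hf_eq z hz.1 hz.2.le
    rw [hev.deriv_eq, Real.deriv_rpow_const y (1/α)]
  have hderiv_pos : ∀ y ∈ Ioo (0:ℝ) p1, T.lam ≤ deriv T.f y := by
    intro y hy
    rcases lt_or_ge 0 (deriv T.f y) with hpos | hneg
    · have := habs y hy
      rwa [abs_of_pos hpos] at this
    · exfalso
      have hy0 : δ₀ / 2 ∈ Ioo (0:ℝ) δ₀ := ⟨by positivity, by linarith⟩
      have hy0' : (δ₀ / 2) ∈ Ioo (0:ℝ) p1 := hIooSub hy0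
      have hdy0 : 0 < deriv T.f (δ₀ / 2) := by
        rw [hderiv_pow _ hy0]
        have := Real.rpow_pos_of_pos hy0.1 (1/α - 1)
        positivity
      have husub : uIcc (δ₀ / 2) y ⊆ Ioo (0:ℝ) p1 :=
        Set.ordConnected_Ioo.uIcc_subset hy0' hy
      have hcont : ContinuousOn (deriv T.f) (uIcc (δ₀ / 2) y) :=
        (hc1f.continuousOn_deriv_of_isOpen isOpen_Ioo le_rfl).mono husub
      have h0mem : (0:ℝ) ∈ uIcc (deriv T.f (δ₀ / 2)) (deriv T.f y) := by
        rw [Set.mem_uIcc]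
        right
        exact ⟨hneg, hdy0.le⟩
      obtain ⟨z, hz, hz0⟩ := intermediate_value_uIcc hcont h0mem
      have := habs z (husub hz)
      rw [hz0] at this
      simp at this
      linarith [T.lam_gt]
  -- the displacement g
  set g : ℝ → ℝ := fun y => T.f y - y with hgdef
  have hgmono : StrictMonoOn g (Ioo 0 p1) := by
    apply strictMonoOn_of_deriv_pos (convex_Ioo 0 p1)
    · exact hc1f.continuousOn.sub continuousOn_id
    · intro y hy
      rw [interior_Ioo] at hy
      have hd : deriv g y = deriv T.f y - 1 := by
        rw [hgdef]
        have := (hdiffAt y hy).sub (differentiableAt_fun_id)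
        rw [deriv_fun_sub (hdiffAt y hy) differentiableAt_fun_id, deriv_id'']
      rw [hd]
      have := hderiv_pos y hy
      linarith [T.lam_gt]
  have hrpow_gt : ∀ y : ℝ, 0 < y → y ≤ δ₀ → y < y ^ (1/α) := by
    intro y hy hyδ
    have hy1 : y < 1 := lt_of_le_of_lt hyδ hδ₀1
    have h1α : 1/α < 1 := by rw [div_lt_one hα0]; exact hα
    have := Real.rpow_lt_rpow_of_exponent_gt hy hy1 h1α
    rwa [Real.rpow_one] at this
  have hδ₀mem : δ₀ ∈ Ioo (0:ℝ) p1 := ⟨hδ₀pos, hδ₀p1⟩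
  set κ := g δ₀ with hκdef
  have hκpos : 0 < κ := by
    have h1 := hrpow_gt δ₀ hδ₀pos le_rfl
    have h2 : g δ₀ = T.f δ₀ - δ₀ := rfl
    rw [hκdef, h2, hf_eq δ₀ hδ₀pos le_rfl]
    linarith
  have hgκ : ∀ y, y ∈ Ioo (0:ℝ) p1 → δ₀ ≤ y → y + κ ≤ T.f y := by
    intro y hy hge
    rcases eq_or_lt_of_le hge with heq' | hlt
    · have : g δ₀ = T.f δ₀ - δ₀ := rfl
      rw [← heq']
      linarith [hκpos]
    · have h1 : g δ₀ < g y := hgmono hδ₀mem hy hlt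
      have h2 : g y = T.f y - y := rfl
      rw [h2] at h1
      linarith
  -- staying below δ₀ forces x very small
  have hC3 : ∀ J : ℕ, ∀ x : ℝ, 0 < x → (∀ j, j ≤ J → T.f^[j] x ≤ δ₀) → x ≤ t J := by
    intro J
    induction J with
    | zero =>
      intro x hx hb
      have h0 := hb 0 le_rfl
      simp only [Function.iterate_zero_apply] at h0
      have : t 0 = δ₀ := by
        show δ₀ ^ ((α:ℝ) ^ 0) = δ₀
        rw [pow_zero, Real.rpow_one]
      rw [this]
      exact h0
    | succ J ih =>
      intro x hx hb
      have hx0 : x ≤ δ₀ := by simpa using hb 0 (by omega)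
      have hfx : T.f x = x ^ (1/α) := hf_eq x hx hx0
      have hfxpos : 0 < T.f x := by
        rw [hfx]; exact Real.rpow_pos_of_pos hx _
      have hfb : ∀ j, j ≤ J → T.f^[j] (T.f x) ≤ δ₀ := by
        intro j hj
        rw [← Function.iterate_succ_apply]
        exact hb (j+1) (by omega)
      have hfle := ih (T.f x) hfxpos hfb
      have h1 : (T.f x) ^ (α:ℝ) ≤ (t J) ^ (α:ℝ) :=
        Real.rpow_le_rpow hfxpos.le hfle hα0.le
      have h2 : (T.f x) ^ (α:ℝ) = x := by
        rw [hfx, ← Real.rpow_mul hx.le, one_div, inv_mul_cancel₀ (ne_of_gt hα0),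
          Real.rpow_one]
      have h3 : (t J) ^ (α:ℝ) = t (J+1) := by
        show (δ₀ ^ ((α:ℝ) ^ J)) ^ (α:ℝ) = δ₀ ^ ((α:ℝ) ^ (J+1))
        rw [← Real.rpow_mul hδ₀pos.le, ← pow_succ]
      rw [h2, h3] at h1
      exact h1
  -- once above δ₀, the orbit climbs by κ each step
  have hC2 : ∀ n : ℕ, ∀ x : ℝ, (∀ j, j < n → T.f^[j] x ∈ Ioo (0:ℝ) p1) →
      ∀ J, J < n → δ₀ ≤ T.f^[J] x →
      ∀ i, J + i < n → δ₀ + (i:ℝ) * κ ≤ T.f^[J + i] x := by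
    intro n x horb J hJ hδJ i
    induction i with
    | zero => intro _; simpa using hδJ
    | succ i ih =>
      intro hin
      have hi : J + i < n := by omega
      have h1 := ih hi
      have hmem : T.f^[J + i] x ∈ Ioo (0:ℝ) p1 := horb _ hi
      have hge : δ₀ ≤ T.f^[J + i] x := by
        have : (0:ℝ) ≤ (i:ℝ) * κ := by positivity
        linarith
      have h2 := hgκ _ hmem hge
      have h3 : T.f^[J + (i + 1)] x = T.f (T.f^[J + i] x) := by
        rw [show J + (i + 1) = (J + i) + 1 by omega, Function.iterate_succ_apply']
      rw [h3]
      push_cast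
      linarith
  set K := Nat.ceil (1/κ) with hKdef
  -- main escape estimate
  have hC : ∀ k n : ℕ, ∀ x : ℝ, n = k + K + 2 →
      (∀ j, j < n → T.f^[j] x ∈ Ioo (0:ℝ) p1) → x ≤ t k := by
    intro k n x hn horb
    have hx0 : 0 < x := by
      have := horb 0 (by omega)
      simpa using this.1
    by_cases hall : ∀ j, j < n → T.f^[j] x < δ₀
    · exact hC3 k x hx0 (fun j hj => (hall j (by omega)).le)
    · push_neg at hall
      obtain ⟨j₀, hj₀n, hj₀⟩ := hall
      have hex : ∃ j, j < n ∧ δ₀ ≤ T.f^[j] x := ⟨j₀, hj₀n, hj₀⟩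
      obtain ⟨hJn, hJδ⟩ := Nat.find_spec hex
      set J := Nat.find hex with hJdef
      have hchain := hC2 n x horb J hJn hJδ (n - 1 - J) (by omega)
      have hlast : T.f^[J + (n - 1 - J)] x < p1 := (horb _ (by omega)).2
      have hlt1 : δ₀ + ((n - 1 - J : ℕ):ℝ) * κ < 1 := by
        have := lt_of_lt_of_le hlast hp1le
        linarith
      have hcast : ((n - 1 - J : ℕ):ℝ) < 1/κ := by
        rw [lt_div_iff₀ hκpos]
        nlinarith [hδ₀pos]
      have hltK : (n - 1 - J) < K + 1 := by
        have h1 : ((n - 1 - J : ℕ):ℝ) < (K:ℝ) + 1 := by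
          have := Nat.le_ceil (1/κ)
          rw [← hKdef] at this
          linarith
        exact_mod_cast h1
      have hJge : k + 1 ≤ J := by omega
      have hbelow : ∀ j, j ≤ J - 1 → T.f^[j] x ≤ δ₀ := by
        intro j hj
        have hjJ : j < J := by omega
        have hh := Nat.find_min hex hjJ
        push_neg at hh
        exact (hh (by omega)).le
      have := hC3 (J-1) x hx0 hbelow
      exact le_trans this (ht_anti k (J-1) (by omega))
  -- cylinders sit inside small intervals
  have hcylsub : ∀ k : ℕ, T.cyl (k + K + 2) (fun _ => 0) ⊆ Ioc 0 (t k) := by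
    intro k x hx
    simp only [PCMarkovMap.cyl, Set.mem_iInter, Set.mem_preimage, Finset.mem_range] at hx
    have horb : ∀ j, j < k + K + 2 → T.f^[j] x ∈ Ioo (0:ℝ) p1 := by
      intro j hj
      have := hx j hj
      rwa [T.pt0] at this
    refine ⟨?_, hC k _ x rfl horb⟩
    have := horb 0 (by omega)
    simpa using this.1
  -- lower bound on the measure of small intervals
  have hμlb : ∀ k : ℕ,
      ENNReal.ofReal (c₁ * Real.exp (-((k + K + 3 : ℕ) : ℝ) * h)) ≤ μ (Ioc 0 (t (k+1))) := by
    intro k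
    have hword : ∀ j, j < k + K + 3 → (fun _ : ℕ => 0) j < T.m := fun _ _ => hm0
    have hne : (T.cyl (k + K + 3) (fun _ => 0)).Nonempty :=
      ⟨t (k + K + 3), hcylmem _ (by omega)⟩
    have hlow := (hG (k + K + 3) (by omega) _ hword hne).1
    refine le_trans hlow (measure_mono ?_)
    have := hcylsub (k+1)
    rwa [show k + 1 + K + 2 = k + K + 3 by ring] at this
  -- logarithmic weights
  set Lδ := -Real.log δ₀ with hLδdef
  have hLδpos : 0 < Lδ := by
    have : Real.log δ₀ < 0 := Real.log_neg hδ₀pos hδ₀1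
    rw [hLδdef]; linarith
  set β : ℕ → ℝ := fun k => α ^ (k+1) * Lδ - α ^ k * Lδ with hβdef
  have hβnn : ∀ k, 0 ≤ β k := by
    intro k
    have h1 : (α:ℝ) ^ k ≤ α ^ (k+1) := pow_le_pow_right₀ hα.le (by omega)
    have : (α ^ (k+1) - α ^ k) * Lδ ≥ 0 := by
      apply mul_nonneg (by linarith) hLδpos.le
    show 0 ≤ α ^ (k+1) * Lδ - α ^ k * Lδ
    nlinarith
  have hlogt : ∀ (k : ℕ) (x : ℝ), 0 < x → x ≤ t k → α ^ k * Lδ ≤ |Real.log x| := by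
    intro k x hx hxt
    have h1 : Real.log x ≤ Real.log (t k) := Real.log_le_log hx hxt
    have h2 : Real.log (t k) = α ^ k * Real.log δ₀ := Real.log_rpow hδ₀pos _
    rw [h2] at h1
    have h3 : α ^ k * Lδ ≤ -Real.log x := by
      rw [hLδdef]
      nlinarith
    exact le_trans h3 (neg_le_abs _)
  -- pointwise bound by indicator sums
  have hptwise : ∀ N : ℕ, ∀ x ∈ Ioc (0:ℝ) 1,
      (∑ k ∈ Finset.range N,
        (Ioc (0:ℝ) (t (k+1))).indicator (fun _ => ENNReal.ofReal (β k)) x)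
        ≤ ENNReal.ofReal |Real.log x| := by
    intro N
    induction N with
    | zero => intro x _; simp
    | succ N ih =>
      intro x hx
      by_cases hxt : x ≤ t (N+1)
      · have hmem : ∀ k, k < N + 1 → x ∈ Ioc (0:ℝ) (t (k+1)) := by
          intro k hk
          exact ⟨hx.1, le_trans hxt (ht_anti (k+1) (N+1) (by omega))⟩
        have hsum : ∀ k ∈ Finset.range (N+1),
            (Ioc (0:ℝ) (t (k+1))).indicator (fun _ => ENNReal.ofReal (β k)) x
              = ENNReal.ofReal (β k) := by
          intro k hk
          exact Set.indicator_of_mem (hmem k (Finset.mem_range.mp hk)) _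
        rw [Finset.sum_congr rfl hsum,
          ← ENNReal.ofReal_sum_of_nonneg (fun k _ => hβnn k)]
        apply ENNReal.ofReal_le_ofReal
        have hts : ∑ k ∈ Finset.range (N+1), β k = α ^ (N+1) * Lδ - α ^ 0 * Lδ := by
          rw [hβdef]
          exact Finset.sum_range_sub (fun k => α ^ k * Lδ) (N+1)
        rw [hts]
        have hlb := hlogt (N+1) x hx.1 hxt
        have h0 : (0:ℝ) ≤ α ^ 0 * Lδ := by positivity
        linarith
      · rw [Finset.sum_range_succ,
          Set.indicator_of_notMem (fun hmem => hxt hmem.2), add_zero]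
        exact ih x hx
  -- integrate
  have hsub1 : ∀ k : ℕ, Ioc (0:ℝ) (t (k+1)) ⊆ Ioc (0:ℝ) 1 :=
    fun k => Ioc_subset_Ioc le_rfl (le_trans (ht_le _) (by linarith))
  have hsumI : ∀ N : ℕ,
      (∑ k ∈ Finset.range N, ENNReal.ofReal (β k) * μ (Ioc (0:ℝ) (t (k+1))))
        ≤ ∫⁻ y in Ioc (0:ℝ) 1, ENNReal.ofReal |Real.log y| ∂μ := by
    intro N
    have h1 : ∀ k ∈ Finset.range N,
        ENNReal.ofReal (β k) * μ (Ioc (0:ℝ) (t (k+1)))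
          = ∫⁻ x in Ioc (0:ℝ) 1,
              (Ioc (0:ℝ) (t (k+1))).indicator (fun _ => ENNReal.ofReal (β k)) x ∂μ := by
      intro k _
      rw [lintegral_indicator_const measurableSet_Ioc,
        Measure.restrict_apply measurableSet_Ioc,
        Set.inter_eq_left.mpr (hsub1 k)]
    rw [Finset.sum_congr rfl h1,
      ← lintegral_finset_sum _ (fun k _ => measurable_const.indicator measurableSet_Ioc)]
    exact setLIntegral_mono (Real.measurable_log.abs.ennreal_ofReal)
      (fun x hx => hptwise N x hx)
  -- each term is at least a fixed positive constant
  set E := ENNReal.ofReal ((α - 1) * Lδ * (c₁ * Real.exp (-((K:ℝ) + 3) * Real.log α)))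
    with hEdef
  have hterm : ∀ k : ℕ, E ≤ ENNReal.ofReal (β k) * μ (Ioc (0:ℝ) (t (k+1))) := by
    intro k
    have hak : Real.exp (-((k + K + 3 : ℕ):ℝ) * h)
        = Real.exp (-((K:ℝ) + 3) * Real.log α) / α ^ k := by
      rw [heq]
      push_cast
      rw [show -((k:ℝ) + (K:ℝ) + 3) * Real.log α
          = (-((K:ℝ) + 3) * Real.log α) - (k:ℝ) * Real.log α by ring,
        Real.exp_sub, Real.exp_nat_mul, Real.exp_log hα0]
    have hαkne : (α:ℝ) ^ k ≠ 0 := (pow_pos hα0 k).ne'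
    have hreq : β k * (c₁ * Real.exp (-((k + K + 3 : ℕ):ℝ) * h))
        = (α - 1) * Lδ * (c₁ * Real.exp (-((K:ℝ) + 3) * Real.log α)) := by
      rw [hak, hβdef]
      field_simp
      ring
    calc E = ENNReal.ofReal (β k) * ENNReal.ofReal (c₁ * Real.exp (-((k + K + 3 : ℕ):ℝ) * h)) := by
          rw [hEdef, ← ENNReal.ofReal_mul (hβnn k), hreq]
      _ ≤ ENNReal.ofReal (β k) * μ (Ioc (0:ℝ) (t (k+1))) :=
          mul_le_mul_right (hμlb k) _
  have hEpos : 0 < E := by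
    rw [hEdef]
    apply ENNReal.ofReal_pos.mpr
    have h1 : 0 < α - 1 := by linarith
    have h2 : 0 < Real.exp (-((K:ℝ) + 3) * Real.log α) := Real.exp_pos _
    positivity
  have hNE : ∀ N : ℕ, (N : ℝ≥0∞) * E ≤ ∫⁻ y in Ioc (0:ℝ) 1, ENNReal.ofReal |Real.log y| ∂μ := by
    intro N
    calc (N : ℝ≥0∞) * E = ∑ _k ∈ Finset.range N, E := by
          rw [Finset.sum_const, Finset.card_range, nsmul_eq_mul]
      _ ≤ ∑ k ∈ Finset.range N, ENNReal.ofReal (β k) * μ (Ioc (0:ℝ) (t (k+1))) :=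
          Finset.sum_le_sum (fun k _ => hterm k)
      _ ≤ _ := hsumI N
  refine le_antisymm le_top ?_
  have htop : (⊤ : ℝ≥0∞) = (⨆ n : ℕ, (n : ℝ≥0∞)) * E := by
    rw [ENNReal.iSup_natCast, ENNReal.top_mul hEpos.ne']
  rw [htop, ENNReal.iSup_mul]
  exact iSup_le hNE
end

section
/- Let f : [0,1] → [0,1] be a transitive piecewise C¹ uniformly expanding Markov map with a singularity at p⁺ that is periodic of period n, with no other singularities. Let β̲ = liminf_{x→p⁺} log((f^n)'(x))/(−log(x−p)), and let μ be an f-invariant Borel probability measure satisfying Gibbs bounds with parameter h > 0 (in particular the measure of maximal entropy, with h = h_top(f)). If β̲ < 1 and h < −(1/n)·log(1 − β̲), then ∫_{(p,1]} |log(x−p)| dμ(x) = ∞, i.e. μ is nonadapted with respect to p. -/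
open Set Filter MeasureTheory Topology
open scoped ENNReal

section Helpers

namespace PCMarkovMapAux

lemma pt_mono (T : PCMarkovMap) {a b : ℕ} (hab : a ≤ b) (hbm : b ≤ T.m) :
    T.pt a ≤ T.pt b := by
  induction b with
  | zero => simp_all
  | succ k ih =>
    rcases Nat.eq_or_lt_of_le hab with heq | hlt
    · subst heq; rfl
    · have h1 : T.pt a ≤ T.pt k := ih (by omega) (by omega)
      exact h1.trans (T.pt_lt k (by omega)).le

lemma pt_nonneg (T : PCMarkovMap) (i : ℕ) (hi : i ≤ T.m) : 0 ≤ T.pt i := by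
  have := pt_mono T (Nat.zero_le i) hi
  simpa [T.pt0] using this

lemma pt_le_one (T : PCMarkovMap) (i : ℕ) (hi : i ≤ T.m) : T.pt i ≤ 1 := by
  have := pt_mono T hi le_rfl
  simpa [T.ptm] using this

lemma Ioo_subset_unit (T : PCMarkovMap) (i : ℕ) (hi : i < T.m) :
    Ioo (T.pt i) (T.pt (i + 1)) ⊆ Icc (0:ℝ) 1 := fun x hx =>
  ⟨(pt_nonneg T i hi.le).trans hx.1.le, hx.2.le.trans (pt_le_one T (i+1) hi)⟩

lemma lt_of_strictMonoOn_tendsto {g : ℝ → ℝ} {p c q : ℝ}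
    (mono : StrictMonoOn g (Ioo p c)) (ht : Tendsto g (𝓝[>] p) (𝓝 q)) :
    ∀ x ∈ Ioo p c, q < g x := by
  intro x hx
  have hpx' : p < (p + x) / 2 := by linarith [hx.1]
  have hx'x : (p + x) / 2 < x := by linarith [hx.1]
  have hx' : (p + x) / 2 ∈ Ioo p c := ⟨hpx', hx'x.trans hx.2⟩
  have h1 : q ≤ g ((p + x) / 2) := by
    refine le_of_tendsto ht ?_
    filter_upwards [Ioo_mem_nhdsGT_of_mem (⟨le_rfl, hpx'⟩ : p ∈ Ico p ((p+x)/2))] with y hy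
    exact (mono ⟨hy.1, hy.2.trans hx'.2⟩ hx' hy.2).le
  exact h1.trans_lt (mono hx' hx hx'x)

lemma gt_of_strictAntiOn_tendsto {g : ℝ → ℝ} {p c q : ℝ}
    (anti : StrictAntiOn g (Ioo p c)) (ht : Tendsto g (𝓝[>] p) (𝓝 q)) :
    ∀ x ∈ Ioo p c, g x < q := by
  intro x hx
  have hpx' : p < (p + x) / 2 := by linarith [hx.1]
  have hx'x : (p + x) / 2 < x := by linarith [hx.1]
  have hx' : (p + x) / 2 ∈ Ioo p c := ⟨hpx', hx'x.trans hx.2⟩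
  have h1 : g ((p + x) / 2) ≤ q := by
    refine ge_of_tendsto ht ?_
    filter_upwards [Ioo_mem_nhdsGT_of_mem (⟨le_rfl, hpx'⟩ : p ∈ Ico p ((p+x)/2))] with y hy
    exact (anti ⟨hy.1, hy.2.trans hx'.2⟩ hx' hy.2).le
  exact (anti hx' hx hx'x).trans_le h1

lemma exists_piece_right (T : PCMarkovMap) {q : ℝ} (h0 : 0 ≤ q) (h1 : q < 1) :
    ∃ r, r < T.m ∧ T.pt r ≤ q ∧ q < T.pt (r + 1) := by
  classical
  set s : Finset ℕ := (Finset.range T.m).filter (fun i => T.pt i ≤ q) with hs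
  have h0s : 0 ∈ s := by
    simp only [hs, Finset.mem_filter, Finset.mem_range, T.pt0]
    exact ⟨T.hm, h0⟩
  have hne : s.Nonempty := ⟨0, h0s⟩
  set r := s.max' hne with hr_def
  have hr : r ∈ s := s.max'_mem hne
  simp only [hs, Finset.mem_filter, Finset.mem_range] at hr
  refine ⟨r, hr.1, hr.2, ?_⟩
  by_contra hle
  push_neg at hle
  have hr1m : r + 1 ≤ T.m := hr.1
  rcases eq_or_lt_of_le hr1m with he | hlt
  · rw [he, T.ptm] at hle; linarith
  · have hmem : r + 1 ∈ s := by
      simp only [hs, Finset.mem_filter, Finset.mem_range]; exact ⟨hlt, hle⟩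
    have := s.le_max' _ hmem
    omega

lemma exists_piece_left (T : PCMarkovMap) {q : ℝ} (h0 : 0 < q) (h1 : q ≤ 1) :
    ∃ r, r < T.m ∧ T.pt r < q ∧ q ≤ T.pt (r + 1) := by
  classical
  set s : Finset ℕ := (Finset.range T.m).filter (fun i => T.pt i < q) with hs
  have h0s : 0 ∈ s := by
    simp only [hs, Finset.mem_filter, Finset.mem_range, T.pt0]
    exact ⟨T.hm, h0⟩
  have hne : s.Nonempty := ⟨0, h0s⟩
  set r := s.max' hne with hr_def
  have hr : r ∈ s := s.max'_mem hne
  simp only [hs, Finset.mem_filter, Finset.mem_range] at hr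
  refine ⟨r, hr.1, hr.2, ?_⟩
  by_contra hle
  push_neg at hle
  have hr1m : r + 1 ≤ T.m := hr.1
  rcases eq_or_lt_of_le hr1m with he | hlt
  · rw [he, T.ptm] at hle; linarith
  · have hmem : r + 1 ∈ s := by
      simp only [hs, Finset.mem_filter, Finset.mem_range]; exact ⟨hlt, hle⟩
    have := s.le_max' _ hmem
    omega

end PCMarkovMapAux

end Helpers

namespace PCMarkovMapAux

lemma itin (T : PCMarkovMap) (j : ℕ) (hj : j < T.m) (p : ℝ) (hp : p = T.pt j) :
    ∀ t : ℕ, ∃ (d : ℝ) (w : ℕ) (q : ℝ), 0 < d ∧ w < T.m ∧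
      (∀ x ∈ Ioo p (p + d), T.f^[t] x ∈ Ioo (T.pt w) (T.pt (w + 1))) ∧
      (StrictMonoOn (T.f^[t]) (Ioo p (p + d)) ∨ StrictAntiOn (T.f^[t]) (Ioo p (p + d))) ∧
      Tendsto (T.f^[t]) (𝓝[>] p) (𝓝 q) ∧ (t = 0 → w = j) := by
  intro t
  induction t with
  | zero =>
    have hd : 0 < T.pt (j + 1) - p := by rw [hp]; linarith [T.pt_lt j hj]
    refine ⟨T.pt (j + 1) - p, j, p, hd, hj, ?_, Or.inl ?_, ?_, fun _ => rfl⟩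
    · intro x hx
      simp only [Function.iterate_zero, id_eq]
      refine ⟨by rw [← hp]; exact hx.1, ?_⟩
      have := hx.2; linarith
    · simp only [Function.iterate_zero]
      exact fun a _ b _ hab => hab
    · simp only [Function.iterate_zero]
      exact tendsto_id.mono_left nhdsWithin_le_nhds
  | succ t ih =>
    obtain ⟨d, w, q, hd, hw, hmaps, hmono, htend, -⟩ := ih
    have hIooMem : Ioo p (p + d) ∈ 𝓝[>] p :=
      Ioo_mem_nhdsGT_of_mem ⟨le_rfl, by linarith⟩
    have hIccq : q ∈ Icc (T.pt w) (T.pt (w + 1)) := by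
      refine IsClosed.mem_of_tendsto isClosed_Icc htend ?_
      filter_upwards [hIooMem] with y hy
      exact Ioo_subset_Icc_self (hmaps y hy)
    set q' := T.br w q with hq'def
    -- convergence of next iterate
    have htend' : Tendsto (T.f^[t + 1]) (𝓝[>] p) (𝓝 q') := by
      have h1 : Tendsto (T.f^[t]) (𝓝[>] p) (𝓝[Icc (T.pt w) (T.pt (w + 1))] q) := by
        rw [tendsto_nhdsWithin_iff]
        refine ⟨htend, ?_⟩
        filter_upwards [hIooMem] with y hy
        exact Ioo_subset_Icc_self (hmaps y hy)
      have h2 : Tendsto (T.br w) (𝓝[Icc (T.pt w) (T.pt (w + 1))] q) (𝓝 q') :=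
        (T.br_cont w hw q hIccq).tendsto
      refine (h2.comp h1).congr' ?_
      filter_upwards [hIooMem] with y hy
      simp only [Function.comp_apply]
      rw [T.br_eq_f w hw _ (hmaps y hy)]
      exact (Function.iterate_succ_apply' T.f t y).symm
    -- pointwise description on the interval
    have hEq : ∀ y ∈ Ioo p (p + d), T.f^[t + 1] y = T.br w (T.f^[t] y) := by
      intro y hy
      rw [Function.iterate_succ_apply', T.br_eq_f w hw _ (hmaps y hy)]
    have hmapsIcc : MapsTo (T.f^[t]) (Ioo p (p + d)) (Icc (T.pt w) (T.pt (w + 1))) :=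
      fun y hy => Ioo_subset_Icc_self (hmaps y hy)
    -- monotonicity of the next iterate
    have hmono' : StrictMonoOn (T.f^[t + 1]) (Ioo p (p + d)) ∨
        StrictAntiOn (T.f^[t + 1]) (Ioo p (p + d)) := by
      have hcomp : StrictMonoOn (T.br w ∘ T.f^[t]) (Ioo p (p + d)) ∨
          StrictAntiOn (T.br w ∘ T.f^[t]) (Ioo p (p + d)) := by
        rcases hmono with hm | hm
        · rcases T.br_mono w hw with hb | hb
          · exact Or.inl (hb.comp hm hmapsIcc)
          · exact Or.inr (hb.comp_strictMonoOn hm hmapsIcc)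
        · rcases T.br_mono w hw with hb | hb
          · exact Or.inr (hb.comp_strictAntiOn hm hmapsIcc)
          · exact Or.inl (hb.comp hm hmapsIcc)
      rcases hcomp with hc | hc
      · left; intro a ha b hb hab
        have := hc ha hb hab
        simpa only [Function.comp_apply, ← hEq a ha, ← hEq b hb] using this
      · right; intro a ha b hb hab
        have := hc ha hb hab
        simpa only [Function.comp_apply, ← hEq a ha, ← hEq b hb] using this
    -- values in [0,1]
    have hval01 : ∀ y ∈ Ioo p (p + d), T.f^[t + 1] y ∈ Icc (0:ℝ) 1 := by
      intro y hy
      rw [Function.iterate_succ_apply']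
      exact T.f_maps _ (Ioo_subset_unit T w hw (hmaps y hy))
    -- a sample point
    have hx₀ : p + d / 2 ∈ Ioo p (p + d) := ⟨by linarith, by linarith⟩
    have hq'mem : q' ∈ Icc (0:ℝ) 1 := by
      refine IsClosed.mem_of_tendsto isClosed_Icc htend' ?_
      filter_upwards [hIooMem] with y hy
      exact hval01 y hy
    rcases hmono' with hm | hm
    · -- increasing case: values lie strictly above q'
      have hside : ∀ x ∈ Ioo p (p + d), q' < T.f^[t + 1] x :=
        lt_of_strictMonoOn_tendsto hm htend'
      have hq'lt1 : q' < 1 := lt_of_lt_of_le (hside _ hx₀) (hval01 _ hx₀).2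
      obtain ⟨r, hrm, hr1, hr2⟩ := exists_piece_right T hq'mem.1 hq'lt1
      have hev : ∀ᶠ x in 𝓝[>] p,
          x ∈ Ioo p (p + d) ∧ T.f^[t + 1] x ∈ Ioo (T.pt r) (T.pt (r + 1)) := by
        filter_upwards [hIooMem, htend'.eventually_lt_const hr2] with x hx hxlt
        exact ⟨hx, ⟨lt_of_le_of_lt hr1 (hside x hx), hxlt⟩⟩
      obtain ⟨u, hu, hsub⟩ := mem_nhdsGT_iff_exists_Ioo_subset.mp hev
      have hIoo_eq : ∀ x ∈ Ioo p (p + (u - p)), x ∈ Ioo p u :=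
        fun x hx => ⟨hx.1, by linarith [hx.2]⟩
      refine ⟨u - p, r, q', sub_pos.mpr hu, hrm, ?_, ?_, htend',
        fun habs => absurd habs (Nat.succ_ne_zero t)⟩
      · intro x hx; exact (hsub (hIoo_eq x hx)).2
      · exact Or.inl (hm.mono (fun x hx => (hsub (hIoo_eq x hx)).1))
    · -- decreasing case: values lie strictly below q'
      have hside : ∀ x ∈ Ioo p (p + d), T.f^[t + 1] x < q' :=
        gt_of_strictAntiOn_tendsto hm htend'
      have hq'pos : 0 < q' := lt_of_le_of_lt (hval01 _ hx₀).1 (hside _ hx₀)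
      obtain ⟨r, hrm, hr1, hr2⟩ := exists_piece_left T hq'pos hq'mem.2
      have hev : ∀ᶠ x in 𝓝[>] p,
          x ∈ Ioo p (p + d) ∧ T.f^[t + 1] x ∈ Ioo (T.pt r) (T.pt (r + 1)) := by
        filter_upwards [hIooMem, htend'.eventually_const_lt hr1] with x hx hxgt
        exact ⟨hx, ⟨hxgt, lt_of_lt_of_le (hside x hx) hr2⟩⟩
      obtain ⟨u, hu, hsub⟩ := mem_nhdsGT_iff_exists_Ioo_subset.mp hev
      have hIoo_eq : ∀ x ∈ Ioo p (p + (u - p)), x ∈ Ioo p u :=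
        fun x hx => ⟨hx.1, by linarith [hx.2]⟩
      refine ⟨u - p, r, q', sub_pos.mpr hu, hrm, ?_, ?_, htend',
        fun habs => absurd habs (Nat.succ_ne_zero t)⟩
      · intro x hx; exact (hsub (hIoo_eq x hx)).2
      · exact Or.inr (hm.mono (fun x hx => (hsub (hIoo_eq x hx)).1))

end PCMarkovMapAux

set_option maxHeartbeats 2000000 in
open PCMarkovMapAux in
/-- Let `f` be a transitive piecewise `C¹` uniformly expanding Markov map with
a singularity at `p⁺ = (pt j)⁺` that is periodic of period `n` and no other singularities, and
let `β̲ = liminf_{x→p⁺} log((fⁿ)'(x))/(−log(x−p))`.  If `μ` satisfies Gibbs bounds with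
parameter `h > 0`, `β̲ < 1` and `h < −(1/n) log(1−β̲)`, then
`∫_{(p,1]} |log(x−p)| dμ = ∞`, i.e. `μ` is nonadapted with respect to `p`. -/
theorem mme_nonadapted_of_entropy_small
    (T : PCMarkovMap) (htrans : T.Transitive)
    (j : ℕ) (hj : j < T.m) (p : ℝ) (hp : p = T.pt j)
    (hsing : T.SingularAt p) (hnosing : T.NoSingularitiesOff p)
    (n : ℕ) (hn : 1 ≤ n) (hper : PerSingAux T.f p n)
    (hmin : ∀ k, 1 ≤ k → k < n → ¬ PerSingAux T.f p k)
    (βlow : ℝ)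
    (hβlow : βlow =
      Filter.liminf (fun y => Real.log (deriv (T.f^[n]) y) / (-Real.log (y - p))) (𝓝[>] p))
    (μ : Measure ℝ) [IsProbabilityMeasure μ] (hinv : T.Invariant μ)
    (h : ℝ) (hh : 0 < h) (hGibbs : T.Gibbs μ h)
    (hβlt : βlow < 1) (hent : h < -(1 / (n : ℝ)) * Real.log (1 - βlow)) :
    (∫⁻ y in Ioc p 1, ENNReal.ofReal |Real.log (y - p)| ∂μ) = ⊤ := by
  classical
  obtain ⟨δ0, hδ0, hmono0, htend0⟩ := hper
  -- itinerary data
  choose Δ ω qq hΔpos hωm hmapsω hmonoω htendω hω0 using itin T j hj p hp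
  have hnpos : 0 < n := hn
  -- a uniform small scale δstar
  have hrangene : (Finset.range n).Nonempty := Finset.nonempty_range_iff.mpr (by omega)
  set δstar : ℝ := min δ0 ((Finset.range n).inf' hrangene Δ) with hδstar_def
  have hδstar_pos : 0 < δstar := by
    refine lt_min hδ0 ?_
    rw [Finset.lt_inf'_iff]
    exact fun t _ => hΔpos t
  have hδstar_le : ∀ t < n, δstar ≤ Δ t := fun t ht =>
    (min_le_right _ _).trans (Finset.inf'_le _ (Finset.mem_range.mpr ht))
  have hδstar_le0 : δstar ≤ δ0 := min_le_left _ _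
  -- the periodic word
  set W : ℕ → ℕ := fun s => ω (s % n) with hW_def
  have hWm : ∀ s, W s < T.m := fun s => hωm _
  have hWper : ∀ s, W (s + n) = W s := by
    intro s; simp only [hW_def, Nat.add_mod_right]
  have hW0 : W 0 = j := by
    simp only [hW_def, Nat.zero_mod]; exact hω0 0 rfl
  -- iterates of points near p stay in prescribed pieces
  have hmem_iter : ∀ x ∈ Ioo p (p + δstar), ∀ t < n,
      T.f^[t] x ∈ Ioo (T.pt (ω t)) (T.pt (ω t + 1)) := by
    intro x hx t ht
    exact hmapsω t x ⟨hx.1, hx.2.trans_le (by linarith [hδstar_le t ht])⟩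
  -- membership in cylinders
  have hcylmem : ∀ (k : ℕ) (x : ℝ), (∀ i < k, T.f^[n * i] x ∈ Ioo p (p + δstar)) →
      x ∈ T.cyl (k * n) W := by
    intro k x hx
    simp only [PCMarkovMap.cyl, Set.mem_iInter, Set.mem_preimage, Finset.mem_range]
    intro s hs
    have hlt : s / n < k := Nat.div_lt_iff_lt_mul hnpos |>.mpr hs
    have hmod : s % n < n := Nat.mod_lt _ hnpos
    have hrw : T.f^[s] x = T.f^[s % n] (T.f^[n * (s / n)] x) := by
      rw [← Function.iterate_add_apply, Nat.mod_add_div s n]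
    rw [hrw]
    exact hmem_iter _ (hx (s / n) hlt) (s % n) hmod
  -- positivity of f^[n] near p
  have hfn_pos : ∀ x ∈ Ioo p (p + δ0), p < T.f^[n] x :=
    lt_of_strictMonoOn_tendsto hmono0 htend0
  -- nested nonempty entry intervals
  have hEta : ∀ k : ℕ, ∃ η : ℝ, 0 < η ∧ η ≤ δstar ∧
      ∀ x ∈ Ioo p (p + η), ∀ i ≤ k, T.f^[n * i] x ∈ Ioo p (p + δstar) := by
    intro k
    induction k with
    | zero =>
      refine ⟨δstar, hδstar_pos, le_rfl, ?_⟩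
      intro x hx i hi
      interval_cases i
      simpa using hx
    | succ k ihk =>
      obtain ⟨η, hη, hηle, hmem⟩ := ihk
      have hev : ∀ᶠ x in 𝓝[>] p,
          x ∈ Ioo p (p + δstar) ∧ T.f^[n] x ∈ Ioo p (p + η) := by
        have h1 : Ioo p (p + min δ0 δstar) ∈ 𝓝[>] p :=
          Ioo_mem_nhdsGT_of_mem ⟨le_rfl, by
            have := lt_min hδ0 hδstar_pos; linarith⟩
        filter_upwards [h1, htend0.eventually_lt_const (show p < p + η by linarith)]
          with x hx1 hx2
        have hxd0 : x ∈ Ioo p (p + δ0) :=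
          ⟨hx1.1, hx1.2.trans_le (by simp [min_le_left])⟩
        exact ⟨⟨hx1.1, hx1.2.trans_le (by simp [min_le_right])⟩,
          ⟨hfn_pos x hxd0, hx2⟩⟩
      obtain ⟨u, hu, hsub⟩ := mem_nhdsGT_iff_exists_Ioo_subset.mp hev
      refine ⟨min (u - p) δstar, lt_min (sub_pos.mpr hu) hδstar_pos, min_le_right _ _, ?_⟩
      intro x hx i hi
      have hx' : x ∈ Ioo p u := ⟨hx.1, by
        have := hx.2; have := min_le_left (u - p) δstar; linarith⟩
      obtain ⟨hxm, hfx⟩ := hsub hx'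
      match i with
      | 0 => simpa using hxm
      | i + 1 =>
        rw [Nat.mul_succ, Function.iterate_add_apply]
        exact hmem _ hfx i (by omega)
  -- cylinders are open and iterates are continuous on them
  have hCopen : ∀ s : ℕ, IsOpen (T.cyl s W) ∧ ContinuousOn (T.f^[s]) (T.cyl s W) := by
    intro s
    induction s with
    | zero =>
      constructor
      · simp only [PCMarkovMap.cyl, Finset.range_zero]
        simp
      · simp only [Function.iterate_zero]
        exact continuousOn_id
    | succ s ihs =>
      have hsplit : T.cyl (s + 1) W =
          T.cyl s W ∩ (T.f^[s]) ⁻¹' Ioo (T.pt (W s)) (T.pt (W s + 1)) := by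
        simp only [PCMarkovMap.cyl, Finset.range_add_one, Finset.set_biInter_insert]
        exact Set.inter_comm _ _
      constructor
      · rw [hsplit]
        exact ihs.2.isOpen_inter_preimage ihs.1 isOpen_Ioo
      · rw [Function.iterate_succ']
        refine ContinuousOn.comp ((T.f_c1 (W s) (hWm s)).continuousOn)
          (ihs.2.mono (by rw [hsplit]; exact Set.inter_subset_left)) ?_
        intro x hx
        rw [hsplit] at hx
        exact hx.2
  -- cylinders lie inside the first piece
  have hC_sub : ∀ k : ℕ, 1 ≤ k → T.cyl (k * n) W ⊆ Ioo p (T.pt (j + 1)) := by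
    intro k hk x hx
    simp only [PCMarkovMap.cyl, Set.mem_iInter, Set.mem_preimage, Finset.mem_range] at hx
    have h0 := hx 0 (by positivity)
    simp only [Function.iterate_zero, id_eq, hW0] at h0
    rw [hp]
    exact h0
  -- shift property
  have hshift : ∀ k : ℕ, ∀ x ∈ T.cyl ((k + 1) * n) W, T.f^[n] x ∈ T.cyl (k * n) W := by
    intro k x hx
    simp only [PCMarkovMap.cyl, Set.mem_iInter, Set.mem_preimage, Finset.mem_range] at hx ⊢
    intro s hs
    rw [← Function.iterate_add_apply]
    have hkn : (k + 1) * n = k * n + n := Nat.succ_mul k n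
    have := hx (s + n) (by omega)
    rwa [hWper s] at this
  -- nonemptiness of cylinders, with points attached to p
  have hC_ne : ∀ k : ℕ, ∃ η : ℝ, 0 < η ∧ Ioo p (p + η) ⊆ T.cyl (k * n) W := by
    intro k
    obtain ⟨η, hη, hηle, hmem⟩ := hEta k
    exact ⟨η, hη, fun x hx => hcylmem k x (fun i hi => hmem x hx i (by omega))⟩
  have hlam0 : (0:ℝ) < T.lam := lt_trans one_pos T.lam_gt
  -- two-point expansion inside cylinders
  have hkey : ∀ (N : ℕ), ∀ s < N, ∀ a ∈ T.cyl N W, ∀ b ∈ T.cyl N W,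
      T.lam ^ s * |b - a| ≤ |T.f^[s] b - T.f^[s] a| := by
    intro N s
    induction s with
    | zero => intro _ a _ b _; simp
    | succ s ihs =>
      intro hs a ha b hb
      have h1 := ihs (by omega) a ha b hb
      have hmem : ∀ c ∈ T.cyl N W, T.f^[s] c ∈ Ioo (T.pt (W s)) (T.pt (W s + 1)) := by
        intro c hc
        simp only [PCMarkovMap.cyl, Set.mem_iInter, Set.mem_preimage, Finset.mem_range] at hc
        exact hc s (by omega)
      have ha' := hmem a ha
      have hb' := hmem b hb
      -- one-step expansion between two points of the same piece
      have mvt : ∀ u v : ℝ, u ∈ Ioo (T.pt (W s)) (T.pt (W s + 1)) →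
          v ∈ Ioo (T.pt (W s)) (T.pt (W s + 1)) → u < v →
          T.lam * (v - u) ≤ |T.f v - T.f u| := by
        intro u v hu hv huv
        have hIcc : Icc u v ⊆ Ioo (T.pt (W s)) (T.pt (W s + 1)) :=
          fun z hz => ⟨lt_of_lt_of_le hu.1 hz.1, lt_of_le_of_lt hz.2 hv.2⟩
        have hdiffOn : DifferentiableOn ℝ T.f (Ioo u v) :=
          ((T.f_c1 (W s) (hWm s)).differentiableOn one_ne_zero).mono
            (fun z hz => hIcc (Ioo_subset_Icc_self hz))
        have hcont : ContinuousOn T.f (Icc u v) :=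
          ((T.f_c1 (W s) (hWm s)).continuousOn).mono hIcc
        obtain ⟨ξ, hξ, hslope⟩ := exists_deriv_eq_slope T.f huv hcont hdiffOn
        have hξI : ξ ∈ Ioo (T.pt (W s)) (T.pt (W s + 1)) :=
          ⟨hu.1.trans hξ.1, hξ.2.trans hv.2⟩
        have hexp := T.f_exp (W s) (hWm s) ξ hξI
        have hvu : (0:ℝ) < v - u := by linarith
        have heq : T.f v - T.f u = deriv T.f ξ * (v - u) := by
          rw [hslope]; field_simp
        calc T.lam * (v - u) ≤ |deriv T.f ξ| * (v - u) :=
              mul_le_mul_of_nonneg_right hexp hvu.le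
          _ = |deriv T.f ξ * (v - u)| := by rw [abs_mul, abs_of_pos hvu]
          _ = |T.f v - T.f u| := by rw [heq]
      have hstep : T.lam * |T.f^[s] b - T.f^[s] a| ≤ |T.f^[s+1] b - T.f^[s+1] a| := by
        rcases lt_trichotomy (T.f^[s] a) (T.f^[s] b) with hlt | heq | hgt
        · have := mvt _ _ ha' hb' hlt
          rw [Function.iterate_succ_apply', Function.iterate_succ_apply']
          calc T.lam * |T.f^[s] b - T.f^[s] a| = T.lam * (T.f^[s] b - T.f^[s] a) := by
                rw [abs_of_pos (by linarith)]
            _ ≤ |T.f (T.f^[s] b) - T.f (T.f^[s] a)| := this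
        · rw [heq]; simp
        · have := mvt _ _ hb' ha' hgt
          rw [Function.iterate_succ_apply', Function.iterate_succ_apply']
          calc T.lam * |T.f^[s] b - T.f^[s] a| = T.lam * (T.f^[s] a - T.f^[s] b) := by
                rw [abs_of_neg (by linarith)]; ring
            _ ≤ |T.f (T.f^[s] a) - T.f (T.f^[s] b)| := this
            _ = |T.f (T.f^[s] b) - T.f (T.f^[s] a)| := abs_sub_comm _ _
      calc T.lam ^ (s + 1) * |b - a| = T.lam * (T.lam ^ s * |b - a|) := by ring
        _ ≤ T.lam * |T.f^[s] b - T.f^[s] a| := by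
            exact mul_le_mul_of_nonneg_left h1 hlam0.le
        _ ≤ |T.f^[s+1] b - T.f^[s+1] a| := hstep
  -- diameter bound for cylinders
  have hdiam : ∀ k : ℕ, 1 ≤ k → ∀ a ∈ T.cyl (k * n) W, ∀ b ∈ T.cyl (k * n) W,
      T.lam ^ (k * n - 1) * |b - a| ≤ 1 := by
    intro k hk a ha b hb
    have hkn1 : 1 ≤ k * n := by
      calc 1 = 1 * 1 := (one_mul 1).symm
      _ ≤ k * n := Nat.mul_le_mul hk hn
    have h1 := hkey (k * n) (k * n - 1) (by omega) a ha b hb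
    have hmem : ∀ c ∈ T.cyl (k * n) W,
        T.f^[k * n - 1] c ∈ Ioo (T.pt (W (k * n - 1))) (T.pt (W (k * n - 1) + 1)) := by
      intro c hc
      simp only [PCMarkovMap.cyl, Set.mem_iInter, Set.mem_preimage, Finset.mem_range] at hc
      exact hc _ (by omega)
    have ha1 := Ioo_subset_unit T _ (hWm (k * n - 1)) (hmem a ha)
    have hb1 := Ioo_subset_unit T _ (hWm (k * n - 1)) (hmem b hb)
    have : |T.f^[k * n - 1] b - T.f^[k * n - 1] a| ≤ 1 := by
      rw [abs_sub_le_iff]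
      constructor <;> [skip; skip] <;>
        (first | (have := ha1.1; have := ha1.2; have := hb1.1; have := hb1.2; linarith))
    linarith
  -- chain rule near p
  have hchain : ∀ x ∈ Ioo p (p + δstar), ∀ t ≤ n,
      ∃ d : ℝ, HasDerivAt (T.f^[t]) d x ∧ T.lam ^ t ≤ |d| := by
    intro x hx t
    induction t with
    | zero =>
      intro _
      refine ⟨1, ?_, by simp⟩
      simp only [Function.iterate_zero]
      exact hasDerivAt_id x
    | succ t iht =>
      intro ht
      obtain ⟨d, hd, hdb⟩ := iht (by omega)
      have hz := hmem_iter x hx t (by omega)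
      have hdf : DifferentiableAt ℝ T.f (T.f^[t] x) :=
        (((T.f_c1 (ω t) (hωm t)).differentiableOn one_ne_zero).differentiableAt
          (isOpen_Ioo.mem_nhds hz))
      refine ⟨deriv T.f (T.f^[t] x) * d, ?_, ?_⟩
      · rw [Function.iterate_succ']
        exact (hdf.hasDerivAt).comp x hd
      · rw [abs_mul]
        have hexp := T.f_exp (ω t) (hωm t) _ hz
        calc T.lam ^ (t + 1) = T.lam * T.lam ^ t := by ring
          _ ≤ |deriv T.f (T.f^[t] x)| * |d| :=
              mul_le_mul hexp hdb (pow_nonneg hlam0.le t) (abs_nonneg _)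
  -- the derivative of f^[n] is positive (≥ lam^n) near p
  have hpos_deriv : ∀ x ∈ Ioo p (p + min δ0 δstar), T.lam ^ n ≤ deriv (T.f^[n]) x := by
    intro x hx
    have hxs : x ∈ Ioo p (p + δstar) :=
      ⟨hx.1, hx.2.trans_le (by simp [min_le_right])⟩
    obtain ⟨d, hd, hdb⟩ := hchain x hxs n le_rfl
    have hd0 : 0 ≤ d := by
      have hslope : Tendsto (slope (T.f^[n]) x) (𝓝[≠] x) (𝓝 d) :=
        hasDerivAt_iff_tendsto_slope.mp hd
      have h2 : Tendsto (slope (T.f^[n]) x) (𝓝[>] x) (𝓝 d) :=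
        hslope.mono_left (nhdsWithin_mono x (fun y hy => ne_of_gt hy))
      refine ge_of_tendsto h2 ?_
      filter_upwards [Ioo_mem_nhdsGT_of_mem (⟨le_rfl, hx.2⟩ : x ∈ Ico x (p + min δ0 δstar))]
        with z hz
      have hxI : x ∈ Ioo p (p + δ0) :=
        ⟨hx.1, hx.2.trans_le (by simp [min_le_left])⟩
      have hzI : z ∈ Ioo p (p + δ0) :=
        ⟨hx.1.trans hz.1, hz.2.trans_le (by simp [min_le_left])⟩
      have hmlt := hmono0 hxI hzI hz.1
      rw [slope_def_field]
      have hzx : (0:ℝ) < z - x := by linarith [hz.1]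
      exact div_nonneg (by linarith) hzx.le
    rw [hd.deriv]
    rwa [abs_of_nonneg hd0] at hdb
  -- setting up the exponent β'
  set E : ℝ := Real.exp (-(n : ℝ) * h) with hE_def
  have hE0 : 0 < E := Real.exp_pos _
  have hE1 : E < 1 := by
    rw [hE_def, Real.exp_lt_one_iff]
    have : (0:ℝ) < (n:ℝ) := by exact_mod_cast hnpos
    nlinarith
  have h1β : 0 < 1 - βlow := by linarith
  have hkeyE : 1 - βlow < E := by
    have hn0 : (0:ℝ) < (n:ℝ) := by exact_mod_cast hnpos
    have h2 : (n:ℝ) * h < -Real.log (1 - βlow) := by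
      calc (n:ℝ) * h < (n:ℝ) * (-(1 / (n:ℝ)) * Real.log (1 - βlow)) :=
            (mul_lt_mul_iff_right₀ hn0).mpr hent
        _ = -Real.log (1 - βlow) := by field_simp
    have h3 : Real.log (1 - βlow) < -((n:ℝ) * h) := by linarith
    calc 1 - βlow = Real.exp (Real.log (1 - βlow)) := (Real.exp_log h1β).symm
      _ < Real.exp (-((n:ℝ) * h)) := Real.exp_lt_exp.mpr h3
      _ = E := by rw [hE_def]; ring_nf
  set β' : ℝ := 1 - ((1 - βlow) + E) / 2 with hβ'_def
  have hββ : β' < βlow := by rw [hβ'_def]; linarith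
  have h1β' : 0 < 1 - β' := by rw [hβ'_def]; ring_nf; nlinarith
  have h1β'E : 1 - β' < E := by rw [hβ'_def]; ring_nf; nlinarith
  have hβ'pos : 0 < β' := by
    have : 1 - β' < 1 := lt_trans h1β'E hE1
    linarith
  -- eventual lower bound on the derivative from the liminf hypothesis
  set δ1 : ℝ := min (min δ0 δstar) 1 with hδ1_def
  have hδ1_pos : 0 < δ1 := lt_min (lt_min hδ0 hδstar_pos) one_pos
  have hδ1_le : δ1 ≤ min δ0 δstar := min_le_left _ _
  have hδ1_le1 : δ1 ≤ 1 := min_le_right _ _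
  have hlamn1 : (1:ℝ) ≤ T.lam ^ n := one_le_pow₀ T.lam_gt.le
  have hIoo1 : Ioo p (p + δ1) ∈ 𝓝[>] p :=
    Ioo_mem_nhdsGT_of_mem ⟨le_rfl, by linarith⟩
  have hratio_nonneg : ∀ᶠ y in 𝓝[>] p,
      (0:ℝ) ≤ Real.log (deriv (T.f^[n]) y) / (-Real.log (y - p)) := by
    filter_upwards [hIoo1] with y hy
    have hyd : y ∈ Ioo p (p + min δ0 δstar) := ⟨hy.1, by linarith [hy.2]⟩
    have hd := hpos_deriv y hyd
    have hlog1 : 0 ≤ Real.log (deriv (T.f^[n]) y) :=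
      Real.log_nonneg (le_trans hlamn1 hd)
    have hyp1 : y - p < 1 := by have := hy.2; linarith
    have hyp0 : 0 < y - p := by linarith [hy.1]
    have : Real.log (y - p) < 0 := Real.log_neg hyp0 hyp1
    exact div_nonneg hlog1 (by linarith)
  have hbdd : IsBoundedUnder (· ≥ ·) (𝓝[>] p)
      (fun y => Real.log (deriv (T.f^[n]) y) / (-Real.log (y - p))) :=
    ⟨0, eventually_map.mpr hratio_nonneg⟩
  have hev2 : ∀ᶠ y in 𝓝[>] p,
      β' < Real.log (deriv (T.f^[n]) y) / (-Real.log (y - p)) := by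
    apply eventually_lt_of_lt_liminf _ hbdd
    rw [← hβlow]; exact hββ
  have hevBig : ∀ᶠ y in 𝓝[>] p, y ∈ Ioo p (p + δ1) ∧
      β' < Real.log (deriv (T.f^[n]) y) / (-Real.log (y - p)) :=
    (eventually_iff.mpr hIoo1).and hev2
  -- extract a concrete right-neighborhood (p, u)
  obtain ⟨u, hu, hsubU⟩ := mem_nhdsGT_iff_exists_Ioo_subset.mp hevBig
  rw [mem_Ioi] at hu
  have hU_sub : Ioo p u ⊆ Ioo p (p + δ1) := fun y hy => (hsubU hy).1
  -- derivative lower bound on (p, u)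
  have hderiv_lb : ∀ y ∈ Ioo p u, (y - p) ^ (-β') ≤ deriv (T.f^[n]) y := by
    intro y hy
    obtain ⟨hy1, hratio⟩ := hsubU hy
    have hyd : y ∈ Ioo p (p + min δ0 δstar) := ⟨hy1.1, by linarith [hy1.2]⟩
    have hd := hpos_deriv y hyd
    have hd0 : 0 < deriv (T.f^[n]) y := lt_of_lt_of_le (by linarith) hd
    have hyp0 : 0 < y - p := by linarith [hy1.1]
    have hyp1 : y - p < 1 := by linarith [hy1.2]
    have hlogD : 0 < -Real.log (y - p) := by
      have := Real.log_neg hyp0 hyp1; linarith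
    have hmul : β' * (-Real.log (y - p)) < Real.log (deriv (T.f^[n]) y) :=
      (lt_div_iff₀ hlogD).mp hratio
    calc (y - p) ^ (-β') = Real.exp (Real.log (y - p) * (-β')) :=
          Real.rpow_def_of_pos hyp0 _
      _ = Real.exp (β' * (-Real.log (y - p))) := by ring_nf
      _ ≤ Real.exp (Real.log (deriv (T.f^[n]) y)) := Real.exp_le_exp.mpr hmul.le
      _ = deriv (T.f^[n]) y := Real.exp_log hd0
  -- differentiability on (p, u)
  have hdiffU : ∀ y ∈ Ioo p u, DifferentiableAt ℝ (T.f^[n]) y := by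
    intro y hy
    have hy1 := hU_sub hy
    have hys : y ∈ Ioo p (p + δstar) := ⟨hy1.1, by
      have h1 : δ1 ≤ δstar := hδ1_le.trans (min_le_right _ _)
      linarith [hy1.2]⟩
    obtain ⟨d, hd, -⟩ := hchain y hys n le_rfl
    exact hd.differentiableAt
  -- the key MVT estimate on (p, u)
  have hMVT : ∀ x ∈ Ioo p u, (x - p) ^ (1 - β') ≤ T.f^[n] x - p := by
    intro x hx
    have hxp : 0 < x - p := by linarith [hx.1]
    have key : ∀ a ∈ Ioo p x, T.f^[n] a + (x - p) ^ (-β') * (x - a) ≤ T.f^[n] x := by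
      intro a ha
      have hax : a < x := ha.2
      have hIccsub : Icc a x ⊆ Ioo p u := fun z hz =>
        ⟨lt_of_lt_of_le ha.1 hz.1, lt_of_le_of_lt hz.2 hx.2⟩
      have hcont : ContinuousOn (T.f^[n]) (Icc a x) := fun z hz =>
        ((hdiffU z (hIccsub hz)).continuousAt).continuousWithinAt
      have hdiff : DifferentiableOn ℝ (T.f^[n]) (Ioo a x) := fun z hz =>
        (hdiffU z (hIccsub (Ioo_subset_Icc_self hz))).differentiableWithinAt
      obtain ⟨ξ, hξ, hslope⟩ := exists_deriv_eq_slope (T.f^[n]) hax hcont hdiff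
      have hξU : ξ ∈ Ioo p u := hIccsub (Ioo_subset_Icc_self hξ)
      have hξp : 0 < ξ - p := by linarith [hξU.1]
      have h1 : (x - p) ^ (-β') ≤ deriv (T.f^[n]) ξ := by
        refine le_trans ?_ (hderiv_lb ξ hξU)
        exact Real.rpow_le_rpow_of_nonpos hξp (by linarith [hξ.2]) (by linarith)
      have hxa : (0:ℝ) < x - a := by linarith
      have heq : T.f^[n] x - T.f^[n] a = deriv (T.f^[n]) ξ * (x - a) := by
        rw [hslope]; field_simp
      nlinarith [mul_le_mul_of_nonneg_right h1 hxa.le]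
    have htendA : Tendsto (fun a => T.f^[n] a + (x - p) ^ (-β') * (x - a)) (𝓝[>] p)
        (𝓝 (p + (x - p) ^ (-β') * (x - p))) := by
      apply Tendsto.add htend0
      apply Tendsto.const_mul
      exact (tendsto_const_nhds.sub (tendsto_id.mono_left nhdsWithin_le_nhds))
    have hle : p + (x - p) ^ (-β') * (x - p) ≤ T.f^[n] x := by
      refine le_of_tendsto htendA ?_
      filter_upwards [Ioo_mem_nhdsGT_of_mem (⟨le_rfl, hx.1⟩ : p ∈ Ico p x)] with a ha
      exact key a ha
    have hrw : (x - p) ^ (-β') * (x - p) = (x - p) ^ (1 - β') := by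
      rw [show (1 : ℝ) - β' = -β' + 1 by ring, Real.rpow_add hxp, Real.rpow_one]
    linarith [hrw ▸ hle]
  -- suprema of cylinders
  set vsup : ℕ → ℝ := fun k => sSup (T.cyl (k * n) W) with hvsup_def
  set uu : ℕ → ℝ := fun k => vsup k - p with huu_def
  have hbddA : ∀ k : ℕ, 1 ≤ k → BddAbove (T.cyl (k * n) W) := fun k hk =>
    BddAbove.mono (hC_sub k hk) bddAbove_Ioo
  have hC_ne' : ∀ k : ℕ, (T.cyl (k * n) W).Nonempty := by
    intro k
    obtain ⟨η, hη, hsub⟩ := hC_ne k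
    exact ⟨p + η / 2, hsub ⟨by linarith, by linarith⟩⟩
  have hle_sup : ∀ k : ℕ, 1 ≤ k → ∀ x ∈ T.cyl (k * n) W, x ≤ vsup k := fun k hk x hx =>
    le_csSup (hbddA k hk) hx
  have huu_pos : ∀ k : ℕ, 1 ≤ k → 0 < uu k := by
    intro k hk
    obtain ⟨η, hη, hsub⟩ := hC_ne k
    have hx : p + η / 2 ∈ T.cyl (k * n) W := hsub ⟨by linarith, by linarith⟩
    have := hle_sup k hk _ hx
    simp only [huu_def]
    linarith
  have hkn_ge : ∀ k : ℕ, 1 ≤ k → 1 ≤ k * n := fun k hk => by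
    calc 1 = 1 * 1 := (one_mul 1).symm
      _ ≤ k * n := Nat.mul_le_mul hk hn
  -- upper bound on cylinder suprema via expansion
  have huu_le : ∀ k : ℕ, 1 ≤ k → uu k ≤ (T.lam ^ (k * n - 1))⁻¹ := by
    intro k hk
    have hpow : (0:ℝ) < T.lam ^ (k * n - 1) := pow_pos hlam0 _
    have : vsup k ≤ p + (T.lam ^ (k * n - 1))⁻¹ := by
      refine le_of_forall_pos_le_add ?_
      intro ε hε
      refine csSup_le (hC_ne' k) ?_
      intro b hb
      obtain ⟨η, hη, hsub⟩ := hC_ne k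
      have hmin_pos : 0 < min η ε := lt_min hη hε
      have hmin_l := min_le_left η ε
      have hmin_r := min_le_right η ε
      have hamem : p + min η ε / 2 ∈ T.cyl (k * n) W :=
        hsub ⟨by linarith, by linarith⟩
      have hd := hdiam k hk _ hamem b hb
      have habs : |b - (p + min η ε / 2)| ≤ (T.lam ^ (k * n - 1))⁻¹ := by
        rw [inv_eq_one_div, le_div_iff₀ hpow]
        nlinarith [hd]
      have hba : b - (p + min η ε / 2) ≤ (T.lam ^ (k * n - 1))⁻¹ :=
        (le_abs_self _).trans habs
      linarith
    simp only [huu_def]; linarith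
  -- choose a starting index K beyond which cylinders are inside (p, u) and tiny
  obtain ⟨K1, hK1⟩ := pow_unbounded_of_one_lt (max (u - p)⁻¹ 1) T.lam_gt
  set K : ℕ := K1 + 1 with hK_def
  have hK1' : (u - p)⁻¹ < T.lam ^ K1 := lt_of_le_of_lt (le_max_left _ _) hK1
  have hK2' : (1:ℝ) < T.lam ^ K1 := lt_of_le_of_lt (le_max_right _ _) hK1
  have hup : (0:ℝ) < u - p := by linarith
  have hKinv : (T.lam ^ K1)⁻¹ < min (u - p) 1 := by
    have h1 : (T.lam ^ K1)⁻¹ < u - p := by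
      rw [inv_eq_one_div, div_lt_iff₀ (by positivity)]
      rw [inv_eq_one_div, div_lt_iff₀ hup] at hK1'
      linarith [hK1']
    have h2 : (T.lam ^ K1)⁻¹ < 1 := by
      rw [inv_eq_one_div, div_lt_iff₀ (by positivity)]
      linarith
    exact lt_min h1 h2
  have hKuu : ∀ k : ℕ, K ≤ k → uu k < min (u - p) 1 := by
    intro k hk
    have hk1 : 1 ≤ k := by omega
    have hkK1 : K1 ≤ k * n - 1 := by
      have : k ≤ k * n := Nat.le_mul_of_pos_right k hnpos
      omega
    have hpowle : T.lam ^ K1 ≤ T.lam ^ (k * n - 1) := pow_le_pow_right₀ T.lam_gt.le hkK1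
    have hinvle : (T.lam ^ (k * n - 1))⁻¹ ≤ (T.lam ^ K1)⁻¹ := by
      apply inv_anti₀ (by positivity) hpowle
    exact lt_of_le_of_lt ((huu_le k hk1).trans hinvle) hKinv
  have hCU : ∀ k : ℕ, K ≤ k → T.cyl (k * n) W ⊆ Ioo p u := by
    intro k hk x hx
    have hk1 : 1 ≤ k := by omega
    have h1 : x ≤ vsup k := hle_sup k hk1 x hx
    have h2 : p < x := by
      have := hC_sub k hk1 hx; exact this.1
    have h3 := hKuu k hk
    have h4 : uu k < u - p := lt_of_lt_of_le h3 (min_le_left _ _)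
    refine ⟨h2, ?_⟩
    simp only [huu_def] at h4
    linarith
  have huu_lt1 : ∀ k : ℕ, K ≤ k → uu k < 1 := fun k hk =>
    lt_of_lt_of_le (hKuu k hk) (min_le_right _ _)
  -- logarithmic sizes
  set L : ℕ → ℝ := fun k => -Real.log (uu k) with hL_def
  have hLpos : ∀ k : ℕ, K ≤ k → 0 < L k := by
    intro k hk
    have := Real.log_neg (huu_pos k (by omega)) (huu_lt1 k hk)
    simp only [hL_def]; linarith
  -- the recursive estimate on suprema
  have hrec : ∀ k : ℕ, K ≤ k → uu (k + 1) ≤ uu k ^ (1 - β')⁻¹ := by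
    intro k hk
    have hxall : ∀ x ∈ T.cyl ((k + 1) * n) W, x - p ≤ uu k ^ (1 - β')⁻¹ := by
      intro x hx
      have hxU : x ∈ Ioo p u := hCU (k + 1) (by omega) hx
      have hMx := hMVT x hxU
      have hfx : T.f^[n] x ∈ T.cyl (k * n) W := hshift k x hx
      have hfxle : T.f^[n] x ≤ vsup k := hle_sup k (by omega) _ hfx
      have h1 : (x - p) ^ (1 - β') ≤ uu k := by
        simp only [huu_def]; linarith
      have hxp0 : (0:ℝ) ≤ x - p := by linarith [hxU.1]
      calc x - p = ((x - p) ^ (1 - β')) ^ (1 - β')⁻¹ :=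
            (Real.rpow_rpow_inv hxp0 (by linarith)).symm
        _ ≤ uu k ^ (1 - β')⁻¹ :=
            Real.rpow_le_rpow (Real.rpow_nonneg hxp0 _) h1 (by positivity)
    have : vsup (k + 1) ≤ p + uu k ^ (1 - β')⁻¹ := by
      refine csSup_le (hC_ne' (k + 1)) ?_
      intro b hb
      have := hxall b hb; linarith
    simp only [huu_def]; linarith
  -- growth of L
  have hLrec : ∀ k : ℕ, K ≤ k → (1 - β')⁻¹ * L k ≤ L (k + 1) := by
    intro k hk
    have h1 : Real.log (uu (k + 1)) ≤ Real.log (uu k ^ (1 - β')⁻¹) :=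
      Real.log_le_log (huu_pos (k + 1) (by omega)) (hrec k hk)
    rw [Real.log_rpow (huu_pos k (by omega))] at h1
    simp only [hL_def]
    nlinarith [h1]
  have hLgrow : ∀ i : ℕ, ((1 - β')⁻¹) ^ i * L K ≤ L (K + i) := by
    intro i
    induction i with
    | zero => simp
    | succ i ihi =>
      have h1 := hLrec (K + i) (by omega)
      have h2 : ((1 - β')⁻¹) ^ (i + 1) * L K = (1 - β')⁻¹ * (((1 - β')⁻¹) ^ i * L K) := by
        ring
      rw [h2, show K + (i + 1) = (K + i) + 1 by omega]
      refine le_trans ?_ h1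
      exact mul_le_mul_of_nonneg_left ihi (by positivity)
  -- Gibbs lower bound
  obtain ⟨c₁, c₂, hc₁, hc₂, hGb⟩ := hGibbs
  have hGlow : ∀ k : ℕ, 1 ≤ k →
      ENNReal.ofReal (c₁ * Real.exp (-((k * n : ℕ) : ℝ) * h)) ≤ μ (T.cyl (k * n) W) :=
    fun k hk => (hGb (k * n) (hkn_ge k hk) W (fun s _ => hWm s) (hC_ne' k)).1
  -- lower bound on the integral from each cylinder
  have hIbound : ∀ k : ℕ, K ≤ k →
      ENNReal.ofReal (c₁ * Real.exp (-((k * n : ℕ) : ℝ) * h) * L k) ≤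
        ∫⁻ y in Ioc p 1, ENNReal.ofReal |Real.log (y - p)| ∂μ := by
    intro k hk
    have hk1 : 1 ≤ k := by omega
    have hCmeas : MeasurableSet (T.cyl (k * n) W) := (hCopen (k * n)).1.measurableSet
    have hCsub : T.cyl (k * n) W ⊆ Ioc p 1 := by
      intro x hx
      have h1 := hC_sub k hk1 hx
      have h2 : T.pt (j + 1) ≤ 1 := pt_le_one T (j + 1) hj
      exact ⟨h1.1, h1.2.le.trans h2⟩
    have step1 : (∫⁻ y in T.cyl (k * n) W, ENNReal.ofReal |Real.log (y - p)| ∂μ) ≤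
        ∫⁻ y in Ioc p 1, ENNReal.ofReal |Real.log (y - p)| ∂μ :=
      lintegral_mono' (Measure.restrict_mono hCsub le_rfl) le_rfl
    have step2 : ENNReal.ofReal (L k) * μ (T.cyl (k * n) W) ≤
        ∫⁻ y in T.cyl (k * n) W, ENNReal.ofReal |Real.log (y - p)| ∂μ := by
      rw [← setLIntegral_const (T.cyl (k * n) W) (ENNReal.ofReal (L k))]
      refine setLIntegral_mono' hCmeas ?_
      intro y hy
      have hyp : p < y := (hC_sub k hk1 hy).1
      have hyu : y - p ≤ uu k := by
        have := hle_sup k hk1 y hy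
        simp only [huu_def]; linarith
      have hlog : Real.log (y - p) ≤ Real.log (uu k) :=
        Real.log_le_log (by linarith) hyu
      have : L k ≤ |Real.log (y - p)| := by
        refine le_trans ?_ (neg_le_abs _)
        simp only [hL_def]; linarith
      exact ENNReal.ofReal_le_ofReal this
    have step3 : ENNReal.ofReal (c₁ * Real.exp (-((k * n : ℕ) : ℝ) * h) * L k) ≤
        ENNReal.ofReal (L k) * μ (T.cyl (k * n) W) := by
      have hLk := hLpos k hk
      calc ENNReal.ofReal (c₁ * Real.exp (-((k * n : ℕ) : ℝ) * h) * L k)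
          = ENNReal.ofReal (L k) *
            ENNReal.ofReal (c₁ * Real.exp (-((k * n : ℕ) : ℝ) * h)) := by
            rw [← ENNReal.ofReal_mul hLk.le]; ring_nf
        _ ≤ ENNReal.ofReal (L k) * μ (T.cyl (k * n) W) :=
            mul_le_mul_right (hGlow k hk1) _
    exact step3.trans (step2.trans step1)
  -- conclude divergence
  by_contra hne
  have hItop : (∫⁻ y in Ioc p 1, ENNReal.ofReal |Real.log (y - p)| ∂μ) ≠ ⊤ := hne
  set B : ℝ := (∫⁻ y in Ioc p 1, ENNReal.ofReal |Real.log (y - p)| ∂μ).toReal with hB_def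
  set r : ℝ := E / (1 - β') with hr_def
  have hr1 : 1 < r := by
    rw [hr_def]
    exact (one_lt_div h1β').mpr h1β'E
  set c0 : ℝ := c₁ * Real.exp (-((K * n : ℕ) : ℝ) * h) * L K with hc0_def
  have hc0pos : 0 < c0 := by
    have := hLpos K le_rfl
    rw [hc0_def]; positivity
  obtain ⟨i, hi⟩ := pow_unbounded_of_one_lt (B / c0) hr1
  -- compare c0 * r ^ i with the k = K + i bound
  have hexp_id : Real.exp (-(((K + i) * n : ℕ) : ℝ) * h) =
      Real.exp (-((K * n : ℕ) : ℝ) * h) * E ^ i := by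
    rw [hE_def, ← Real.exp_nat_mul, ← Real.exp_add]
    congr 1
    push_cast
    ring
  have hcompare : c0 * r ^ i ≤ c₁ * Real.exp (-(((K + i) * n : ℕ) : ℝ) * h) * L (K + i) := by
    have hri : r ^ i = E ^ i * ((1 - β')⁻¹) ^ i := by
      rw [hr_def, div_eq_mul_inv, mul_pow]
    have hA : (0:ℝ) ≤ c₁ * Real.exp (-((K * n : ℕ) : ℝ) * h) * E ^ i := by positivity
    calc c0 * r ^ i
        = (c₁ * Real.exp (-((K * n : ℕ) : ℝ) * h) * E ^ i) * (((1 - β')⁻¹) ^ i * L K) := by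
          rw [hc0_def, hri]; ring
      _ ≤ (c₁ * Real.exp (-((K * n : ℕ) : ℝ) * h) * E ^ i) * L (K + i) :=
          mul_le_mul_of_nonneg_left (hLgrow i) hA
      _ = c₁ * Real.exp (-(((K + i) * n : ℕ) : ℝ) * h) * L (K + i) := by
          rw [hexp_id]; ring
  have hfin : c0 * r ^ i ≤ B := by
    rw [hB_def]
    refine (ENNReal.ofReal_le_iff_le_toReal hItop).mp ?_
    exact le_trans (ENNReal.ofReal_le_ofReal hcompare) (hIbound (K + i) (by omega))
  have : B < c0 * r ^ i := by
    rw [div_lt_iff₀ hc0pos] at hi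
    linarith [hi]
  linarith
end

section
/- Let f : [0,1] → [0,1] be a transitive piecewise C¹ uniformly expanding Markov map with a singularity at p⁺ that is periodic of period n, with no other singularities. Let β̲ = liminf_{x→p⁺} log((f^n)'(x))/(−log(x−p)), and let μ be an f-invariant Borel probability measure satisfying Gibbs bounds with parameter h > 0 (in particular the measure of maximal entropy, with h = h_top(f)). If β̲ = 1, then ∫_{(p,1]} |log(x−p)| dμ(x) = ∞, i.e. μ is nonadapted with respect to p. -/
open Set Filter MeasureTheory Topology
open scoped ENNReal

lemma pcm_pt_mono (T : PCMarkovMap) : ∀ b, b ≤ T.m → ∀ a, a ≤ b → T.pt a ≤ T.pt b := by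
  intro b
  induction b with
  | zero => intro _ a ha; have : a = 0 := Nat.le_zero.mp ha; simp [this]
  | succ k ih =>
    intro hb a ha
    by_cases hak : a = k + 1
    · simp [hak]
    · have ha' : a ≤ k := by omega
      exact (ih (by omega) a ha').trans (T.pt_lt k (by omega)).le

lemma pcm_pt_nonneg (T : PCMarkovMap) (i : ℕ) (hi : i ≤ T.m) : 0 ≤ T.pt i := by
  have := pcm_pt_mono T i hi 0 (Nat.zero_le _); rwa [T.pt0] at this

lemma pcm_pt_le_one (T : PCMarkovMap) (i : ℕ) (hi : i ≤ T.m) : T.pt i ≤ 1 := by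
  have := pcm_pt_mono T T.m le_rfl i hi; rwa [T.ptm] at this

lemma pcm_Ioo_subset (T : PCMarkovMap) (i : ℕ) (hi : i < T.m) :
    Ioo (T.pt i) (T.pt (i+1)) ⊆ Icc (0:ℝ) 1 := by
  intro y hy
  exact ⟨(pcm_pt_nonneg T i hi.le).trans hy.1.le, hy.2.le.trans (pcm_pt_le_one T (i+1) hi)⟩

lemma pcm_loc_right (T : PCMarkovMap) {q : ℝ} (h0 : 0 ≤ q) (h1 : q < 1) :
    ∃ l, l < T.m ∧ T.pt l ≤ q ∧ q < T.pt (l + 1) := by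
  classical
  set P : ℕ → Prop := fun i => T.pt i ≤ q with hP
  have hP0 : P 0 := by simp [P, T.pt0, h0]
  set l := Nat.findGreatest P T.m with hl
  have hPl : P l := Nat.findGreatest_spec (Nat.zero_le _) hP0
  have hlm : l ≤ T.m := Nat.findGreatest_le _
  have hlm' : l < T.m := by
    rcases eq_or_lt_of_le hlm with h | h
    · exfalso; have h2 := hPl; rw [h] at h2; simp only [P] at h2; rw [T.ptm] at h2; linarith
    · exact h
  refine ⟨l, hlm', hPl, ?_⟩
  have hng := Nat.findGreatest_is_greatest (Nat.lt_succ_self l) (by omega)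
  exact not_le.mp hng

lemma pcm_loc_left (T : PCMarkovMap) {q : ℝ} (h0 : 0 < q) (h1 : q ≤ 1) :
    ∃ l, l < T.m ∧ T.pt l < q ∧ q ≤ T.pt (l + 1) := by
  classical
  set P : ℕ → Prop := fun i => T.pt i < q with hP
  have hP0 : P 0 := by simp [P, T.pt0, h0]
  set l := Nat.findGreatest P T.m with hl
  have hPl : P l := Nat.findGreatest_spec (Nat.zero_le _) hP0
  have hlm : l ≤ T.m := Nat.findGreatest_le _
  have hlm' : l < T.m := by
    rcases eq_or_lt_of_le hlm with h | h
    · exfalso; have h2 := hPl; rw [h] at h2; simp only [P] at h2; rw [T.ptm] at h2; linarith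
    · exact h
  refine ⟨l, hlm', hPl, ?_⟩
  have hng := Nat.findGreatest_is_greatest (Nat.lt_succ_self l) (by omega)
  exact not_lt.mp hng

lemma pcm_f_mono (T : PCMarkovMap) (i : ℕ) (hi : i < T.m) :
    StrictMonoOn T.f (Ioo (T.pt i) (T.pt (i+1))) ∨ StrictAntiOn T.f (Ioo (T.pt i) (T.pt (i+1))) := by
  have heq : ∀ y ∈ Ioo (T.pt i) (T.pt (i+1)), T.br i y = T.f y := T.br_eq_f i hi
  rcases T.br_mono i hi with hm | hm
  · left; intro x hx y hy hxy
    have := hm (Ioo_subset_Icc_self hx) (Ioo_subset_Icc_self hy) hxy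
    rwa [heq x hx, heq y hy] at this
  · right; intro x hx y hy hxy
    have := hm (Ioo_subset_Icc_self hx) (Ioo_subset_Icc_self hy) hxy
    rwa [heq x hx, heq y hy] at this

def StSt (T : PCMarkovMap) (p : ℝ) (r : ℕ) : Prop :=
  ∃ q : ℝ, Tendsto (T.f^[r]) (𝓝[>] p) (𝓝 q) ∧ q ∈ Icc (0:ℝ) 1 ∧
    ((∀ᶠ x in 𝓝[>] p, T.f^[r] x ∈ Icc (0:ℝ) 1 ∧ q < T.f^[r] x) ∨
     (∀ᶠ x in 𝓝[>] p, T.f^[r] x ∈ Icc (0:ℝ) 1 ∧ T.f^[r] x < q))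

lemma pcm_st_zero (T : PCMarkovMap) {p : ℝ} (hp0 : 0 ≤ p) (hp1 : p < 1) : StSt T p 0 := by
  refine ⟨p, ?_, ⟨hp0, hp1.le⟩, Or.inl ?_⟩
  · simpa using tendsto_id.mono_left nhdsWithin_le_nhds
  · have hIoo : Ioo p 1 ∈ 𝓝[>] p := Ioo_mem_nhdsGT_of_mem ⟨le_rfl, hp1⟩
    filter_upwards [hIoo] with x hx
    exact ⟨⟨hp0.trans hx.1.le, hx.2.le⟩, by simpa using hx.1⟩

lemma pcm_st_step (T : PCMarkovMap) {p : ℝ} (r : ℕ) (hst : StSt T p r) :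
    ∃ l, l < T.m ∧ (∀ᶠ x in 𝓝[>] p, T.f^[r] x ∈ Ioo (T.pt l) (T.pt (l+1))) ∧
      StSt T p (r+1) := by
  obtain ⟨q, h1, h2, h3⟩ := hst
  rcases h3 with hev | hev
  · -- approach from above
    have hq1 : q < 1 := by
      obtain ⟨x, hx⟩ := hev.exists
      exact lt_of_lt_of_le hx.2 hx.1.2
    obtain ⟨l, hlm, hl1, hl2⟩ := pcm_loc_right T h2.1 hq1
    have hevlt : ∀ᶠ x in 𝓝[>] p, T.f^[r] x < T.pt (l+1) := h1.eventually_lt_const hl2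
    have hIoo : ∀ᶠ x in 𝓝[>] p, T.f^[r] x ∈ Ioo (T.pt l) (T.pt (l+1)) := by
      filter_upwards [hev, hevlt] with x hx hx'
      exact ⟨lt_of_le_of_lt hl1 hx.2, hx'⟩
    have hqmem : q ∈ Icc (T.pt l) (T.pt (l+1)) := ⟨hl1, hl2.le⟩
    refine ⟨l, hlm, hIoo, ?_⟩
    have htendIcc : Tendsto (T.f^[r]) (𝓝[>] p) (𝓝[Icc (T.pt l) (T.pt (l+1))] q) :=
      tendsto_nhdsWithin_iff.2 ⟨h1, hIoo.mono (fun x hx => Ioo_subset_Icc_self hx)⟩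
    have hbrc : Tendsto (T.br l) (𝓝[Icc (T.pt l) (T.pt (l+1))] q) (𝓝 (T.br l q)) :=
      T.br_cont l hlm q hqmem
    have heqev : (fun x => T.br l (T.f^[r] x)) =ᶠ[𝓝[>] p] (T.f^[r+1]) := by
      filter_upwards [hIoo] with x hx
      rw [T.br_eq_f l hlm _ hx, Function.iterate_succ_apply']
    have htend : Tendsto (T.f^[r+1]) (𝓝[>] p) (𝓝 (T.br l q)) :=
      (hbrc.comp htendIcc).congr' heqev
    have hIcc01 : ∀ᶠ x in 𝓝[>] p, T.f^[r+1] x ∈ Icc (0:ℝ) 1 := by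
      filter_upwards [hev] with x hx
      rw [Function.iterate_succ_apply']
      exact T.f_maps _ hx.1
    have hq'mem : T.br l q ∈ Icc (0:ℝ) 1 :=
      IsClosed.mem_of_tendsto isClosed_Icc htend hIcc01
    rcases T.br_mono l hlm with hm | hm
    · refine ⟨T.br l q, htend, hq'mem, Or.inl ?_⟩
      filter_upwards [hIoo, hev, hIcc01] with x hx hx2 hx3
      refine ⟨hx3, ?_⟩
      have := hm hqmem (Ioo_subset_Icc_self hx) hx2.2
      rw [Function.iterate_succ_apply']
      rwa [T.br_eq_f l hlm _ hx] at this
    · refine ⟨T.br l q, htend, hq'mem, Or.inr ?_⟩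
      filter_upwards [hIoo, hev, hIcc01] with x hx hx2 hx3
      refine ⟨hx3, ?_⟩
      have := hm hqmem (Ioo_subset_Icc_self hx) hx2.2
      rw [Function.iterate_succ_apply']
      rwa [T.br_eq_f l hlm _ hx] at this
  · -- approach from below
    have hq0 : 0 < q := by
      obtain ⟨x, hx⟩ := hev.exists
      exact lt_of_le_of_lt hx.1.1 hx.2
    obtain ⟨l, hlm, hl1, hl2⟩ := pcm_loc_left T hq0 h2.2
    have hevgt : ∀ᶠ x in 𝓝[>] p, T.pt l < T.f^[r] x := h1.eventually_const_lt hl1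
    have hIoo : ∀ᶠ x in 𝓝[>] p, T.f^[r] x ∈ Ioo (T.pt l) (T.pt (l+1)) := by
      filter_upwards [hev, hevgt] with x hx hx'
      exact ⟨hx', lt_of_lt_of_le hx.2 hl2⟩
    have hqmem : q ∈ Icc (T.pt l) (T.pt (l+1)) := ⟨hl1.le, hl2⟩
    refine ⟨l, hlm, hIoo, ?_⟩
    have htendIcc : Tendsto (T.f^[r]) (𝓝[>] p) (𝓝[Icc (T.pt l) (T.pt (l+1))] q) :=
      tendsto_nhdsWithin_iff.2 ⟨h1, hIoo.mono (fun x hx => Ioo_subset_Icc_self hx)⟩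
    have hbrc : Tendsto (T.br l) (𝓝[Icc (T.pt l) (T.pt (l+1))] q) (𝓝 (T.br l q)) :=
      T.br_cont l hlm q hqmem
    have heqev : (fun x => T.br l (T.f^[r] x)) =ᶠ[𝓝[>] p] (T.f^[r+1]) := by
      filter_upwards [hIoo] with x hx
      rw [T.br_eq_f l hlm _ hx, Function.iterate_succ_apply']
    have htend : Tendsto (T.f^[r+1]) (𝓝[>] p) (𝓝 (T.br l q)) :=
      (hbrc.comp htendIcc).congr' heqev
    have hIcc01 : ∀ᶠ x in 𝓝[>] p, T.f^[r+1] x ∈ Icc (0:ℝ) 1 := by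
      filter_upwards [hev] with x hx
      rw [Function.iterate_succ_apply']
      exact T.f_maps _ hx.1
    have hq'mem : T.br l q ∈ Icc (0:ℝ) 1 :=
      IsClosed.mem_of_tendsto isClosed_Icc htend hIcc01
    rcases T.br_mono l hlm with hm | hm
    · refine ⟨T.br l q, htend, hq'mem, Or.inr ?_⟩
      filter_upwards [hIoo, hev, hIcc01] with x hx hx2 hx3
      refine ⟨hx3, ?_⟩
      have := hm (Ioo_subset_Icc_self hx) hqmem hx2.2
      rw [Function.iterate_succ_apply']
      rwa [T.br_eq_f l hlm _ hx] at this
    · refine ⟨T.br l q, htend, hq'mem, Or.inl ?_⟩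
      filter_upwards [hIoo, hev, hIcc01] with x hx hx2 hx3
      refine ⟨hx3, ?_⟩
      have := hm (Ioo_subset_Icc_self hx) hqmem hx2.2
      rw [Function.iterate_succ_apply']
      rwa [T.br_eq_f l hlm _ hx] at this

lemma pcm_st_all (T : PCMarkovMap) {p : ℝ} (hp0 : 0 ≤ p) (hp1 : p < 1) :
    ∀ r, StSt T p r := by
  intro r
  induction r with
  | zero => exact pcm_st_zero T hp0 hp1
  | succ r ih => exact (pcm_st_step T r ih).choose_spec.2.2

lemma pcm_hasDerivAt_iterate (T : PCMarkovMap) (w : ℕ → ℕ) (hwm : ∀ i, w i < T.m) :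
    ∀ (N : ℕ) (x : ℝ), (∀ i, i < N → T.f^[i] x ∈ Ioo (T.pt (w i)) (T.pt (w i + 1))) →
      HasDerivAt (T.f^[N]) (∏ i ∈ Finset.range N, deriv T.f (T.f^[i] x)) x := by
  intro N
  induction N with
  | zero => intro x _; simpa using hasDerivAt_id x
  | succ N ih =>
    intro x hx
    have hN := ih x (fun i hi => hx i (hi.trans (Nat.lt_succ_self N)))
    have hmem := hx N (Nat.lt_succ_self N)
    have hdiff : DifferentiableAt ℝ T.f (T.f^[N] x) := by
      have hD := (T.f_c1 (w N) (hwm N)).differentiableOn one_ne_zero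
      exact hD.differentiableAt (isOpen_Ioo.mem_nhds hmem)
    have hdf : HasDerivAt T.f (deriv T.f (T.f^[N] x)) (T.f^[N] x) := hdiff.hasDerivAt
    have hcomp := hdf.comp x hN
    rw [Finset.prod_range_succ]
    rw [show T.f^[N+1] = T.f ∘ T.f^[N] from Function.iterate_succ' T.f N]
    rw [mul_comm]
    exact hcomp

lemma pcm_prod_lb (T : PCMarkovMap) (w : ℕ → ℕ) (hwm : ∀ i, w i < T.m)
    (N : ℕ) (x : ℝ) (hx : ∀ i, i < N → T.f^[i] x ∈ Ioo (T.pt (w i)) (T.pt (w i + 1))) :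
    T.lam ^ N ≤ |∏ i ∈ Finset.range N, deriv T.f (T.f^[i] x)| := by
  rw [Finset.abs_prod]
  have hlam0 : (0:ℝ) ≤ T.lam := (lt_trans one_pos T.lam_gt).le
  calc T.lam ^ N = ∏ _i ∈ Finset.range N, T.lam := by
        rw [Finset.prod_const, Finset.card_range]
    _ ≤ ∏ i ∈ Finset.range N, |deriv T.f (T.f^[i] x)| :=
        Finset.prod_le_prod (fun i _ => hlam0)
          (fun i hi => T.f_exp (w i) (hwm i) _ (hx i (Finset.mem_range.mp hi)))

set_option maxHeartbeats 4000000 in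
/-- Let `f` be a transitive piecewise `C¹` uniformly expanding Markov map with
a singularity at `p⁺ = (pt j)⁺` that is periodic of period `n` and no other singularities, and
let `β̲ = liminf_{x→p⁺} log((fⁿ)'(x))/(−log(x−p))`.  If `μ` satisfies Gibbs bounds with
parameter `h > 0` and `β̲ = 1`, then `∫_{(p,1]} |log(x−p)| dμ = ∞`, i.e. `μ` is nonadapted
with respect to `p`. -/
theorem mme_nonadapted_of_beta_eq_one
    (T : PCMarkovMap) (htrans : T.Transitive)
    (j : ℕ) (hj : j < T.m) (p : ℝ) (hp : p = T.pt j)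
    (hsing : T.SingularAt p) (hnosing : T.NoSingularitiesOff p)
    (n : ℕ) (hn : 1 ≤ n) (hper : PerSingAux T.f p n)
    (hmin : ∀ k, 1 ≤ k → k < n → ¬ PerSingAux T.f p k)
    (βlow : ℝ)
    (hβlow : βlow =
      Filter.liminf (fun y => Real.log (deriv (T.f^[n]) y) / (-Real.log (y - p))) (𝓝[>] p))
    (μ : Measure ℝ) [IsProbabilityMeasure μ] (hinv : T.Invariant μ)
    (h : ℝ) (hh : 0 < h) (hGibbs : T.Gibbs μ h)
    (hβeq : βlow = 1) :
    (∫⁻ y in Ioc p 1, ENNReal.ofReal |Real.log (y - p)| ∂μ) = ⊤ := by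
  classical
  obtain ⟨c₁, c₂, hc₁, hc₂, hGb⟩ := hGibbs
  obtain ⟨δper, hδper, hmono, htendp⟩ := hper
  have hnpos : 0 < n := hn
  have hpj1 : p < T.pt (j+1) := by rw [hp]; exact T.pt_lt j hj
  have hp0 : 0 ≤ p := by rw [hp]; exact pcm_pt_nonneg T j hj.le
  have hp1 : p < 1 := lt_of_lt_of_le hpj1 (pcm_pt_le_one T (j+1) hj)
  have hlam0 : (0:ℝ) < T.lam := lt_trans one_pos T.lam_gt
  -- itinerary word
  have hSt : ∀ r, StSt T p r := pcm_st_all T hp0 hp1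
  have hIt : ∀ r, ∃ l, l < T.m ∧
      (∀ᶠ x in 𝓝[>] p, T.f^[r] x ∈ Ioo (T.pt l) (T.pt (l+1))) := by
    intro r
    obtain ⟨l, h1, h2, _⟩ := pcm_st_step T r (hSt r)
    exact ⟨l, h1, h2⟩
  choose w0 hw0m hw0ev using hIt
  -- w0 0 = j
  have hw00 : T.pt (w0 0) ≤ p ∧ p < T.pt (w0 0 + 1) := by
    have hev0 := hw0ev 0
    simp only [Function.iterate_zero, id_eq] at hev0
    constructor
    · by_contra hcon
      push_neg at hcon
      have h2 : ∀ᶠ x in 𝓝[>] p, x ∈ Ioo p (T.pt (w0 0)) := Ioo_mem_nhdsGT_of_mem ⟨le_rfl, hcon⟩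
      obtain ⟨x, hx1, hx2⟩ := (hev0.and h2).exists
      exact absurd hx1.1 (not_lt.2 hx2.2.le)
    · have h2 : ∀ᶠ x in 𝓝[>] p, x ∈ Ioi p := eventually_mem_nhdsWithin
      obtain ⟨x, hx1, hx2⟩ := (hev0.and h2).exists
      exact lt_trans hx2 hx1.2
  have hw00j : w0 0 = j := by
    by_contra hne
    rcases Nat.lt_or_ge (w0 0) j with hlt | hge
    · have hle : T.pt (w0 0 + 1) ≤ T.pt j := pcm_pt_mono T j hj.le (w0 0 + 1) hlt
      rw [← hp] at hle
      linarith [hw00.2]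
    · have hgt : j < w0 0 := lt_of_le_of_ne hge (Ne.symm hne)
      have hle : T.pt (j+1) ≤ T.pt (w0 0) := pcm_pt_mono T (w0 0) (hw0m 0).le (j+1) hgt
      linarith [hw00.1, hpj1]
  set w : ℕ → ℕ := fun i => w0 (i % n) with hwdef
  have hwm : ∀ i, w i < T.m := fun i => hw0m _
  -- positivity of f^[n] near p⁺
  have hpos_n : ∀ x ∈ Ioo p (p + δper), p < T.f^[n] x := by
    intro x hx
    set x' := (p + x)/2 with hx'def
    have hx'mem : x' ∈ Ioo p (p + δper) := by
      constructor
      · simp only [hx'def]; linarith [hx.1]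
      · simp only [hx'def]; linarith [hx.1, hx.2]
    have hx'x : x' < x := by simp only [hx'def]; linarith [hx.1]
    have h1 : T.f^[n] x' < T.f^[n] x := hmono hx'mem hx hx'x
    have h2 : p ≤ T.f^[n] x' := by
      apply le_of_tendsto htendp
      filter_upwards [Ioo_mem_nhdsGT_of_mem ⟨le_rfl, hx'mem.1⟩] with y hy
      have hymem : y ∈ Ioo p (p + δper) := ⟨hy.1, lt_trans hy.2 hx'mem.2⟩
      exact (hmono hymem hx'mem hy.2).le
    linarith
  have htendp' : Tendsto (T.f^[n]) (𝓝[>] p) (𝓝[>] p) := by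
    rw [tendsto_nhdsWithin_iff]
    refine ⟨htendp, ?_⟩
    filter_upwards [(Ioo_mem_nhdsGT_of_mem ⟨le_rfl, by linarith⟩ : Ioo p (p + δper) ∈ 𝓝[>] p)] with x hx
    exact hpos_n x hx
  have hQ : ∀ i : ℕ, Tendsto (T.f^[n * i]) (𝓝[>] p) (𝓝[>] p) := by
    intro i
    induction i with
    | zero => rw [Nat.mul_zero, Function.iterate_zero]; exact tendsto_id
    | succ i ih =>
      have hiter : T.f^[n * (i+1)] = T.f^[n*i] ∘ T.f^[n] := by
        rw [Nat.mul_succ, Function.iterate_add]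
      rw [hiter]
      exact ih.comp htendp'
  have hEv : ∀ i : ℕ, ∀ᶠ x in 𝓝[>] p, T.f^[i] x ∈ Ioo (T.pt (w i)) (T.pt (w i + 1)) := by
    intro i
    have hdecomp : ∀ x : ℝ, T.f^[i] x = T.f^[i % n] (T.f^[n * (i / n)] x) := by
      intro x
      conv_lhs => rw [← Nat.mod_add_div i n]
      exact Function.iterate_add_apply _ _ _ _
    have h1 := (hQ (i / n)).eventually (hw0ev (i % n))
    filter_upwards [h1] with x hx
    rw [hdecomp x]
    exact hx
  -- cylinders
  have hmemcyl : ∀ (N : ℕ) (x : ℝ), x ∈ T.cyl N w ↔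
      ∀ k, k < N → T.f^[k] x ∈ Ioo (T.pt (w k)) (T.pt (w k + 1)) := by
    intro N x
    simp [PCMarkovMap.cyl, Set.mem_iInter, Set.mem_preimage, Finset.mem_range]
  have hcylev : ∀ N, ∀ᶠ x in 𝓝[>] p, x ∈ T.cyl N w := by
    intro N
    have h1 : ∀ k ∈ Finset.range N, ∀ᶠ x in 𝓝[>] p,
        T.f^[k] x ∈ Ioo (T.pt (w k)) (T.pt (w k + 1)) := fun k _ => hEv k
    have h2 := (Filter.eventually_all_finset (Finset.range N)).2 h1
    filter_upwards [h2] with x hx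
    exact (hmemcyl N x).2 (fun k hk => hx k (Finset.mem_range.2 hk))
  have hshift : ∀ (N M i : ℕ) (x : ℝ), n * i + M ≤ N → x ∈ T.cyl N w →
      T.f^[n * i] x ∈ T.cyl M w := by
    intro N M i x hle hx
    rw [hmemcyl] at hx ⊢
    intro k hk
    rw [← Function.iterate_add_apply]
    have hkk : w (k + n * i) = w k := by
      simp only [hwdef, Nat.add_mul_mod_self_left]
    rw [← hkk]
    exact hx (k + n*i) (by omega)
  have hcyl_succ : ∀ N, T.cyl (N+1) w =
      T.cyl N w ∩ (T.f^[N]) ⁻¹' (Ioo (T.pt (w N)) (T.pt (w N + 1))) := by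
    intro N
    ext x
    rw [hmemcyl, Set.mem_inter_iff, hmemcyl, Set.mem_preimage]
    constructor
    · intro hx
      exact ⟨fun k hk => hx k (by omega), hx N (by omega)⟩
    · rintro ⟨h1, h2⟩ k hk
      rcases Nat.lt_succ_iff_lt_or_eq.mp hk with hlt | heq
      · exact h1 k hlt
      · rw [heq]; exact h2
  -- convexity and monotonicity of cylinders
  have hConv : ∀ N, (∀ x ∈ T.cyl N w, ∀ y ∈ T.cyl N w, Icc x y ⊆ T.cyl N w) ∧
      (StrictMonoOn (T.f^[N]) (T.cyl N w) ∨ StrictAntiOn (T.f^[N]) (T.cyl N w)) := by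
    intro N
    induction N with
    | zero =>
      have huniv : T.cyl 0 w = Set.univ := by
        ext x; simp [hmemcyl]
      rw [huniv]
      constructor
      · intro x _ y _ z _; exact Set.mem_univ z
      · left
        rw [Function.iterate_zero]
        exact strictMono_id.strictMonoOn _
    | succ N ih =>
      obtain ⟨hOC, hM⟩ := ih
      have hsub : T.cyl (N+1) w ⊆ T.cyl N w := by
        rw [hcyl_succ]; exact Set.inter_subset_left
      have hmapsto : MapsTo (T.f^[N]) (T.cyl (N+1) w) (Ioo (T.pt (w N)) (T.pt (w N + 1))) := by
        intro x hx
        rw [hcyl_succ] at hx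
        exact hx.2
      have hfN := pcm_f_mono T (w N) (hwm N)
      constructor
      · intro x hx y hy z hz
        rw [hcyl_succ] at hx hy ⊢
        have hzN : z ∈ T.cyl N w := hOC x hx.1 y hy.1 hz
        refine ⟨hzN, ?_⟩
        rcases hM with hm | hm
        · have h1 : T.f^[N] x ≤ T.f^[N] z := hm.monotoneOn hx.1 hzN hz.1
          have h2 : T.f^[N] z ≤ T.f^[N] y := hm.monotoneOn hzN hy.1 hz.2
          exact ⟨lt_of_lt_of_le hx.2.1 h1, lt_of_le_of_lt h2 hy.2.2⟩
        · have h1 : T.f^[N] z ≤ T.f^[N] x := hm.antitoneOn hx.1 hzN hz.1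
          have h2 : T.f^[N] y ≤ T.f^[N] z := hm.antitoneOn hzN hy.1 hz.2
          exact ⟨lt_of_lt_of_le hy.2.1 h2, lt_of_le_of_lt h1 hx.2.2⟩
      · have hiter : T.f^[N+1] = T.f ∘ T.f^[N] := Function.iterate_succ' T.f N
        have hMres : StrictMonoOn (T.f^[N]) (T.cyl (N+1) w) ∨
            StrictAntiOn (T.f^[N]) (T.cyl (N+1) w) :=
          hM.imp (fun hmm => hmm.mono hsub) (fun hmm => hmm.mono hsub)
        rcases hMres with hm | hm <;> rcases hfN with hf | hf
        · left; rw [hiter]; exact hf.comp hm hmapsto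
        · right; rw [hiter]; exact hf.comp_strictMonoOn hm hmapsto
        · right; rw [hiter]; exact hf.comp_strictAntiOn hm hmapsto
        · left; rw [hiter]; exact hf.comp hm hmapsto
  -- smallness of cylinders
  have hwIcc : ∀ i, Ioo (T.pt (w i)) (T.pt (w i + 1)) ⊆ Icc (0:ℝ) 1 :=
    fun i => pcm_Ioo_subset T (w i) (hwm i)
  have hsmall : ∀ N, 1 ≤ N → ∀ x ∈ T.cyl N w, x - p ≤ (T.lam ^ (N-1))⁻¹ := by
    intro N hN x hx
    by_contra hcon
    push_neg at hcon
    set M := N - 1 with hMdef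
    set c := (T.lam ^ M)⁻¹ with hcdef
    have hlamM : 0 < T.lam ^ M := by positivity
    have hc0 : 0 < c := by positivity
    set a := x - c with hadef
    have hax : a < x := by simp only [hadef]; linarith
    have hpa : p < a := by simp only [hadef]; linarith [hcon]
    have h2 : ∀ᶠ y in 𝓝[>] p, y ∈ Ioo p a := Ioo_mem_nhdsGT_of_mem ⟨le_rfl, hpa⟩
    obtain ⟨a', ha'cyl, ha'mem⟩ := ((hcylev N).and h2).exists
    have ha'x : a' < x := lt_trans ha'mem.2 hax
    have hIccsub : Icc a' x ⊆ T.cyl N w := (hConv N).1 a' ha'cyl x hx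
    set F' : ℝ → ℝ := fun ξ => ∏ i ∈ Finset.range M, deriv T.f (T.f^[i] ξ) with hF'def
    have hHD : ∀ ξ ∈ Icc a' x, HasDerivAt (T.f^[M]) (F' ξ) ξ := by
      intro ξ hξ
      exact pcm_hasDerivAt_iterate T w hwm M ξ
        (fun i hi => (hmemcyl N ξ).1 (hIccsub hξ) i (by omega))
    have hcont : ContinuousOn (T.f^[M]) (Icc a' x) :=
      fun ξ hξ => ((hHD ξ hξ).continuousAt).continuousWithinAt
    obtain ⟨ξ, hξmem, hξeq⟩ := exists_hasDerivAt_eq_slope (T.f^[M]) F' ha'x hcont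
      (fun ξ hξ => hHD ξ (Ioo_subset_Icc_self hξ))
    have hξcyl : ξ ∈ T.cyl N w := hIccsub (Ioo_subset_Icc_self hξmem)
    have hlb : T.lam ^ M ≤ |F' ξ| :=
      pcm_prod_lb T w hwm M ξ (fun i hi => (hmemcyl N ξ).1 hξcyl i (by omega))
    have hub : |T.f^[M] x - T.f^[M] a'| ≤ 1 := by
      have h1 : T.f^[M] x ∈ Icc (0:ℝ) 1 := hwIcc M ((hmemcyl N x).1 hx M (by omega))
      have h2' : T.f^[M] a' ∈ Icc (0:ℝ) 1 := hwIcc M ((hmemcyl N a').1 ha'cyl M (by omega))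
      rw [abs_le]
      constructor
      · linarith [h1.1, h2'.2]
      · linarith [h1.2, h2'.1]
    have hxa : 0 < x - a' := by linarith
    have hprod : F' ξ * (x - a') = T.f^[M] x - T.f^[M] a' := by
      rw [hξeq]; field_simp
    have hle1 : T.lam ^ M * (x - a') ≤ 1 := by
      have h4 : T.lam ^ M * (x - a') ≤ |F' ξ| * (x - a') :=
        mul_le_mul_of_nonneg_right hlb hxa.le
      have h5 : |F' ξ| * (x - a') = |T.f^[M] x - T.f^[M] a'| := by
        rw [← abs_of_pos hxa, ← abs_mul, hprod]
      rw [h5] at h4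
      exact h4.trans hub
    have hxa' : c < x - a' := by
      have := ha'mem.2
      simp only [hadef] at this
      linarith
    have hcc : T.lam ^ M * c = 1 := by
      rw [hcdef]; field_simp
    nlinarith [hlamM, hxa', hle1]
  -- choice of ε
  set ε : ℝ := Real.exp (-((n:ℝ)*h) - 1) with hεdef
  have hε0 : 0 < ε := Real.exp_pos _
  have hε1 : ε < 1 := by
    rw [hεdef, Real.exp_lt_one_iff]
    have hn' : (1:ℝ) ≤ n := by exact_mod_cast hn
    nlinarith
  -- liminf extraction
  have hS : sSup {a : ℝ | ∀ᶠ y in 𝓝[>] p,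
      a ≤ Real.log (deriv (T.f^[n]) y) / (-Real.log (y - p))} = 1 := by
    rw [← Filter.liminf_eq, ← hβlow, hβeq]
  have hliminf : ∀ᶠ y in 𝓝[>] p,
      1 - ε ≤ Real.log (deriv (T.f^[n]) y) / (-Real.log (y - p)) := by
    set S := {a : ℝ | ∀ᶠ y in 𝓝[>] p,
      a ≤ Real.log (deriv (T.f^[n]) y) / (-Real.log (y - p))} with hSdef
    have hne : S.Nonempty := by
      by_contra hcon
      rw [Set.not_nonempty_iff_eq_empty.mp hcon, Real.sSup_empty] at hS
      norm_num at hS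
    have hbdd : BddAbove S := by
      by_contra hcon
      rw [Real.sSup_of_not_bddAbove hcon] at hS
      norm_num at hS
    obtain ⟨a, haS, ha⟩ := exists_lt_of_lt_csSup hne (show (1:ℝ) - ε < sSup S by rw [hS]; linarith)
    have haS' : ∀ᶠ y in 𝓝[>] p,
        a ≤ Real.log (deriv (T.f^[n]) y) / (-Real.log (y - p)) := haS
    exact haS'.mono (fun y hy => le_trans ha.le hy)
  -- positivity and differentiability of deriv f^[n] near p⁺
  have hDpos : ∀ᶠ y in 𝓝[>] p, 0 < deriv (T.f^[n]) y ∧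
      HasDerivAt (T.f^[n]) (deriv (T.f^[n]) y) y := by
    have hmem : ∀ᶠ y in 𝓝[>] p, y ∈ Ioo p (p + δper) :=
      Ioo_mem_nhdsGT_of_mem ⟨le_rfl, by linarith⟩
    filter_upwards [hcylev n, hmem] with y hy hymem
    have horb : ∀ i, i < n → T.f^[i] y ∈ Ioo (T.pt (w i)) (T.pt (w i + 1)) :=
      (hmemcyl n y).1 hy
    have hHD := pcm_hasDerivAt_iterate T w hwm n y horb
    have hDval : deriv (T.f^[n]) y = ∏ i ∈ Finset.range n, deriv T.f (T.f^[i] y) := hHD.deriv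
    have hHD' : HasDerivAt (T.f^[n]) (deriv (T.f^[n]) y) y := by rw [hDval]; exact hHD
    refine ⟨?_, hHD'⟩
    have habs : T.lam ^ n ≤ |deriv (T.f^[n]) y| := by
      rw [hDval]; exact pcm_prod_lb T w hwm n y horb
    have hnonneg : 0 ≤ deriv (T.f^[n]) y := by
      have hslope : Tendsto (slope (T.f^[n]) y) (𝓝[>] y) (𝓝 (deriv (T.f^[n]) y)) := by
        have h1 := hasDerivAt_iff_tendsto_slope.1 hHD'
        exact h1.mono_left (nhdsWithin_mono y (fun z hz => ne_of_gt hz))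
      apply ge_of_tendsto hslope
      filter_upwards [Ioo_mem_nhdsGT_of_mem ⟨le_rfl, hymem.2⟩] with z hz
      have hzmem : z ∈ Ioo p (p + δper) := ⟨lt_trans hymem.1 hz.1, hz.2⟩
      have hfz : T.f^[n] y < T.f^[n] z := hmono hymem hzmem hz.1
      rw [slope_def_field]
      apply div_nonneg (by linarith) (by linarith [hz.1])
    have hlampow : 0 < T.lam ^ n := by positivity
    rw [abs_of_nonneg hnonneg] at habs
    linarith
  have hG : ∀ᶠ y in 𝓝[>] p, (y - p) ^ (-(1 - ε) : ℝ) ≤ deriv (T.f^[n]) y := by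
    have hylt : ∀ᶠ y in 𝓝[>] p, y ∈ Ioo p (p+1) :=
      Ioo_mem_nhdsGT_of_mem ⟨le_rfl, by linarith⟩
    filter_upwards [hliminf, hylt, hDpos] with y hy hymem hD
    have hyp : 0 < y - p := sub_pos.2 hymem.1
    have hyp1 : y - p < 1 := by have := hymem.2; linarith
    have hlogneg : Real.log (y - p) < 0 := Real.log_neg hyp hyp1
    have hBpos : 0 < -Real.log (y - p) := by linarith
    have h1 : (1 - ε) * (-Real.log (y - p)) ≤ Real.log (deriv (T.f^[n]) y) := by
      rw [le_div_iff₀ hBpos] at hy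
      linarith
    have h2 : Real.exp ((1 - ε) * (-Real.log (y - p))) ≤ deriv (T.f^[n]) y := by
      calc Real.exp ((1-ε) * (-Real.log (y-p)))
          ≤ Real.exp (Real.log (deriv (T.f^[n]) y)) := Real.exp_le_exp.2 h1
        _ = deriv (T.f^[n]) y := Real.exp_log hD.1
    calc (y - p) ^ (-(1-ε) : ℝ) = Real.exp (Real.log (y-p) * (-(1-ε))) :=
          Real.rpow_def_of_pos hyp _
      _ = Real.exp ((1-ε) * (-Real.log (y-p))) := by ring_nf
      _ ≤ _ := h2
  -- the region
  obtain ⟨u, hu, husub⟩ := mem_nhdsGT_iff_exists_Ioo_subset.1 (hG.and hDpos)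
  set δ : ℝ := min (min (u - p) (1 - p)) (Real.exp (-1)) with hδdef
  have hup : p < u := hu
  have hδ0 : 0 < δ := lt_min (lt_min (by linarith) (by linarith)) (Real.exp_pos _)
  have hδu : p + δ ≤ u := by
    have : δ ≤ u - p := le_trans (min_le_left _ _) (min_le_left _ _)
    linarith
  have hδe : δ ≤ Real.exp (-1) := min_le_right _ _
  have hδ1p : δ ≤ 1 - p := le_trans (min_le_left _ _) (min_le_right _ _)
  have hδlt1 : δ < 1 := lt_of_le_of_lt hδe (by rw [Real.exp_lt_one_iff]; norm_num)
  have hregion : ∀ y ∈ Ioo p (p + δ),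
      ((y - p) ^ (-(1 - ε) : ℝ) ≤ deriv (T.f^[n]) y) ∧
      (0 < deriv (T.f^[n]) y ∧ HasDerivAt (T.f^[n]) (deriv (T.f^[n]) y) y) :=
    fun y hy => husub ⟨hy.1, lt_of_lt_of_le hy.2 hδu⟩
  -- per-period estimate
  have hstep : ∀ y ∈ Ioo p (p + δ), (y - p) ^ (ε:ℝ) ≤ T.f^[n] y - p := by
    intro y hy
    have hyp : 0 < y - p := sub_pos.2 hy.1
    set c := (y - p) ^ (-(1-ε) : ℝ) with hcdef
    have hmvt : ∀ a ∈ Ioo p y, c * (y - a) ≤ T.f^[n] y - T.f^[n] a := by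
      intro a ha
      have hay : a < y := ha.2
      have hsub2 : Icc a y ⊆ Ioo p (p + δ) := by
        intro z hz
        exact ⟨lt_of_lt_of_le ha.1 hz.1, lt_of_le_of_lt hz.2 hy.2⟩
      have hcont : ContinuousOn (T.f^[n]) (Icc a y) :=
        fun z hz => ((hregion z (hsub2 hz)).2.2.continuousAt).continuousWithinAt
      obtain ⟨ξ, hξ, hξeq⟩ := exists_hasDerivAt_eq_slope (T.f^[n])
        (fun z => deriv (T.f^[n]) z) hay hcont
        (fun z hz => (hregion z (hsub2 (Ioo_subset_Icc_self hz))).2.2)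
      have hξmem : ξ ∈ Ioo p (p + δ) := hsub2 (Ioo_subset_Icc_self hξ)
      have h1 : c ≤ deriv (T.f^[n]) ξ := by
        refine le_trans ?_ (hregion ξ hξmem).1
        exact Real.rpow_le_rpow_of_nonpos (sub_pos.2 hξmem.1) (by linarith [hξ.2]) (by linarith)
      have hya : 0 < y - a := by linarith
      have hprod : deriv (T.f^[n]) ξ * (y - a) = T.f^[n] y - T.f^[n] a := by
        rw [hξeq]; field_simp
      calc c * (y - a) ≤ deriv (T.f^[n]) ξ * (y - a) :=
            mul_le_mul_of_nonneg_right h1 hya.le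
        _ = T.f^[n] y - T.f^[n] a := hprod
    have htendL : Tendsto (fun a => c * (y - a)) (𝓝[>] p) (𝓝 (c * (y - p))) := by
      apply Tendsto.mono_left ?_ nhdsWithin_le_nhds
      exact (tendsto_const_nhds.mul (tendsto_const_nhds.sub tendsto_id))
    have htendR : Tendsto (fun a => T.f^[n] y - T.f^[n] a) (𝓝[>] p) (𝓝 (T.f^[n] y - p)) :=
      tendsto_const_nhds.sub htendp
    have hev : ∀ᶠ a in 𝓝[>] p, c * (y - a) ≤ T.f^[n] y - T.f^[n] a := by
      filter_upwards [Ioo_mem_nhdsGT_of_mem ⟨le_rfl, hy.1⟩] with a ha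
      exact hmvt a ha
    have hfinal : c * (y - p) ≤ T.f^[n] y - p := le_of_tendsto_of_tendsto htendL htendR hev
    have h1 : (y - p) ^ (ε:ℝ) = (y - p) ^ (-(1-ε) + 1 : ℝ) := by
      congr 1
      ring
    rw [h1, Real.rpow_add hyp, Real.rpow_one]
    exact hfinal
  -- choice of K
  obtain ⟨K0, hK0⟩ := pow_unbounded_of_one_lt (δ⁻¹) T.lam_gt
  set K := K0 + 1 with hKdef
  have hKbig : (T.lam ^ (n * K - 1))⁻¹ < δ := by
    have hpowpos : 0 < T.lam ^ (n * K - 1) := by positivity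
    rw [inv_lt_comm₀ hpowpos hδ0]
    refine lt_of_lt_of_le hK0 (pow_le_pow_right₀ T.lam_gt.le ?_)
    have h1 : K0 + 1 ≤ n * K := by
      calc K0 + 1 = 1 * (K0 + 1) := (Nat.one_mul _).symm
        _ ≤ n * (K0 + 1) := Nat.mul_le_mul_right _ hn
    omega
  have hcyl_in : ∀ N, n * K ≤ N → ∀ x ∈ T.cyl N w, x ∈ Ioo p (p + δ) := by
    intro N hNK x hx
    have hN1 : 1 ≤ N := by
      have : 0 < n * K := Nat.mul_pos hnpos (by omega)
      omega
    have hxpos : p < x := by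
      have h0 := (hmemcyl N x).1 hx 0 hN1
      simp only [Function.iterate_zero, id_eq] at h0
      have hw0j : w 0 = j := by
        simp only [hwdef, Nat.zero_mod, hw00j]
      rw [hw0j, ← hp] at h0
      exact h0.1
    have h2 : x - p ≤ (T.lam ^ (N-1))⁻¹ := hsmall N hN1 x hx
    have h3 : (T.lam ^ (N-1))⁻¹ ≤ (T.lam ^ (n*K-1))⁻¹ := by
      rw [inv_eq_one_div, inv_eq_one_div]
      apply one_div_le_one_div_of_le (by positivity)
      exact pow_le_pow_right₀ T.lam_gt.le (by omega)
    exact ⟨hxpos, by linarith⟩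
  -- main estimate
  set L : ℝ := -Real.log δ with hLdef
  have hL1 : 1 ≤ L := by
    have h1 : Real.log δ ≤ Real.log (Real.exp (-1)) := Real.log_le_log hδ0 hδe
    rw [Real.log_exp] at h1
    rw [hLdef]; linarith
  have hmain : ∀ k : ℕ, ∀ x ∈ T.cyl (n * (k + K)) w, L / ε ^ k ≤ -Real.log (x - p) := by
    intro k
    induction k with
    | zero =>
      intro x hx
      have hxin := hcyl_in (n * (0 + K)) (le_of_eq (by ring)) x hx
      have hxp : 0 < x - p := sub_pos.2 hxin.1
      have h1 : Real.log (x - p) ≤ Real.log δ := Real.log_le_log hxp (by linarith [hxin.2])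
      simp only [pow_zero, div_one]
      rw [hLdef]; linarith
    | succ k ih =>
      intro x hx
      have hxin := hcyl_in (n * (k + 1 + K)) (Nat.mul_le_mul le_rfl (by omega)) x hx
      have hxstep := hstep x hxin
      have hfx : T.f^[n] x ∈ T.cyl (n * (k + K)) w := by
        have hs := hshift (n * (k + 1 + K)) (n * (k + K)) 1 x (le_of_eq (by ring)) hx
        rwa [Nat.mul_one] at hs
      have ihfx := ih _ hfx
      have hxp : 0 < x - p := sub_pos.2 hxin.1
      have hrpos : 0 < (x - p) ^ (ε:ℝ) := Real.rpow_pos_of_pos hxp ε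
      have hlog : Real.log ((x-p) ^ (ε:ℝ)) ≤ Real.log (T.f^[n] x - p) :=
        Real.log_le_log hrpos hxstep
      rw [Real.log_rpow hxp] at hlog
      have h2 : L / ε ^ k ≤ ε * (-Real.log (x - p)) := le_trans ihfx (by linarith)
      rw [pow_succ, ← div_div]
      have h3 : L / ε ^ k / ε ≤ (ε * (-Real.log (x - p))) / ε := by gcongr
      refine le_trans h3 (le_of_eq ?_)
      exact mul_div_cancel_left₀ _ hε0.ne'
  -- integral bound
  have hIbound : ∀ k : ℕ,
      ENNReal.ofReal ((L / ε ^ k) * (c₁ * Real.exp (-((n * (k + K) : ℕ) : ℝ) * h))) ≤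
        ∫⁻ y in Ioc p 1, ENNReal.ofReal |Real.log (y - p)| ∂μ := by
    intro k
    obtain ⟨N, hNdef⟩ : ∃ N, N = n * (k + K) := ⟨_, rfl⟩
    rw [← hNdef]
    have hN1 : 1 ≤ N := by
      have h1 : 0 < n * K := Nat.mul_pos hnpos (by omega)
      have h2 : n * K ≤ N := by rw [hNdef]; exact Nat.mul_le_mul le_rfl (by omega)
      omega
    obtain ⟨Tk, hTkdef⟩ : ∃ t, t = L / ε ^ k := ⟨_, rfl⟩
    rw [← hTkdef]
    have hεk : (0:ℝ) < ε ^ k := by positivity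
    have hTk1 : 1 ≤ Tk := by
      rw [hTkdef, le_div_iff₀ hεk, one_mul]
      have : ε ^ k ≤ 1 := pow_le_one₀ hε0.le hε1.le
      linarith
    have hTk0 : 0 < Tk := by linarith
    have hLTk : L ≤ Tk := by
      rw [hTkdef, le_div_iff₀ hεk]
      have h1 : ε ^ k ≤ 1 := pow_le_one₀ hε0.le hε1.le
      have h2 := mul_le_mul_of_nonneg_left h1 (by linarith : (0:ℝ) ≤ L)
      simpa using h2
    obtain ⟨r, hrdef⟩ : ∃ r, r = Real.exp (-Tk) := ⟨_, rfl⟩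
    have hr0 : 0 < r := by rw [hrdef]; exact Real.exp_pos _
    have hr1 : r ≤ δ := by
      have h1 : -Tk ≤ Real.log δ := by rw [hLdef] at hLTk; linarith
      calc r = Real.exp (-Tk) := hrdef
        _ ≤ Real.exp (Real.log δ) := Real.exp_le_exp.2 h1
        _ = δ := Real.exp_log hδ0
    have hsubcyl : T.cyl N w ⊆ Ioc p (p + r) := by
      intro x hx
      have h1 := hmain k x (by rw [← hNdef]; exact hx)
      have hxin := hcyl_in N (by rw [hNdef]; exact Nat.mul_le_mul le_rfl (by omega)) x hx
      have hxp : 0 < x - p := sub_pos.2 hxin.1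
      refine ⟨hxin.1, ?_⟩
      have h2 : Real.log (x - p) ≤ -Tk := by rw [hTkdef]; linarith
      have h3 : x - p ≤ Real.exp (-Tk) := by
        calc x - p = Real.exp (Real.log (x - p)) := (Real.exp_log hxp).symm
          _ ≤ Real.exp (-Tk) := Real.exp_le_exp.2 h2
      rw [hrdef]; linarith
    have hIocsub : Ioc p (p + r) ⊆ Ioc p 1 := by
      intro y hy
      exact ⟨hy.1, le_trans hy.2 (by linarith)⟩
    have hcylne : (T.cyl N w).Nonempty := (hcylev N).exists
    have hGibbsN := (hGb N hN1 w (fun k' _ => hwm k') hcylne).1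
    calc ENNReal.ofReal (Tk * (c₁ * Real.exp (-(N:ℝ) * h)))
        = ENNReal.ofReal Tk * ENNReal.ofReal (c₁ * Real.exp (-(N:ℝ)*h)) :=
          ENNReal.ofReal_mul hTk0.le
      _ ≤ ENNReal.ofReal Tk * μ (T.cyl N w) := mul_le_mul_right hGibbsN _
      _ ≤ ENNReal.ofReal Tk * μ (Ioc p (p + r)) := mul_le_mul_right (measure_mono hsubcyl) _
      _ = ∫⁻ _y in Ioc p (p+r), ENNReal.ofReal Tk ∂μ := (setLIntegral_const _ _).symm
      _ ≤ ∫⁻ y in Ioc p (p+r), ENNReal.ofReal |Real.log (y - p)| ∂μ := by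
          apply lintegral_mono_ae
          filter_upwards [ae_restrict_mem measurableSet_Ioc] with y hy
          apply ENNReal.ofReal_le_ofReal
          have hyp : 0 < y - p := sub_pos.2 hy.1
          have h2 : Real.log (y - p) ≤ -Tk := by
            have h3 : Real.log (y-p) ≤ Real.log r := Real.log_le_log hyp (by linarith [hy.2])
            rw [hrdef, Real.log_exp] at h3
            exact h3
          calc Tk ≤ -Real.log (y - p) := by linarith
            _ ≤ |Real.log (y - p)| := neg_le_abs _
      _ ≤ ∫⁻ y in Ioc p 1, ENNReal.ofReal |Real.log (y - p)| ∂μ :=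
          lintegral_mono_set hIocsub
  -- conclusion
  by_contra hne
  set C0 : ℝ := L * c₁ * Real.exp (-((n:ℝ)*(K:ℝ))*h) with hC0def
  have hC0pos : 0 < C0 := by
    rw [hC0def]
    have : (0:ℝ) < L := by linarith
    positivity
  have hBk : ∀ k : ℕ, (L / ε ^ k) * (c₁ * Real.exp (-((n * (k + K) : ℕ) : ℝ) * h)) =
      C0 * Real.exp (k:ℝ) := by
    intro k
    have hεk : ε ^ k = Real.exp ((k:ℝ) * (-((n:ℝ)*h) - 1)) := by
      rw [hεdef, ← Real.exp_nat_mul]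
    have hNcast : ((n*(k+K) : ℕ) : ℝ) = (n:ℝ) * ((k:ℝ) + (K:ℝ)) := by push_cast; ring
    calc L / ε^k * (c₁ * Real.exp (-((n*(k+K):ℕ):ℝ) * h))
        = L * c₁ * (Real.exp (-((k:ℝ) * (-((n:ℝ)*h) - 1))) *
            Real.exp (-((n:ℝ)*((k:ℝ)+(K:ℝ))) * h)) := by
          rw [hεk, hNcast, div_eq_mul_inv, ← Real.exp_neg]; ring
      _ = L * c₁ * Real.exp (-((k:ℝ) * (-((n:ℝ)*h) - 1)) + (-((n:ℝ)*((k:ℝ)+(K:ℝ))) * h)) := by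
          rw [Real.exp_add]
      _ = L * c₁ * (Real.exp (-((n:ℝ)*(K:ℝ))*h) * Real.exp (k:ℝ)) := by
          rw [← Real.exp_add]; congr 1; ring
      _ = C0 * Real.exp (k:ℝ) := by rw [hC0def]; ring
  set I := ∫⁻ y in Ioc p 1, ENNReal.ofReal |Real.log (y - p)| ∂μ with hIdef
  obtain ⟨k, hk⟩ := exists_nat_ge (I.toReal / C0)
  have hIk := hIbound k
  rw [hBk k] at hIk
  have h2 : I.toReal < C0 * Real.exp (k:ℝ) := by
    have hek : (k:ℝ) + 1 ≤ Real.exp (k:ℝ) := Real.add_one_le_exp _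
    have h3 : I.toReal ≤ C0 * k := by
      rw [div_le_iff₀ hC0pos] at hk
      linarith
    nlinarith
  have h4 : I < ENNReal.ofReal (C0 * Real.exp (k:ℝ)) :=
    (ENNReal.lt_ofReal_iff_toReal_lt hne).2 h2
  exact absurd hIk (not_le.2 h4)
end
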